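/- arXiv:2510.25710 — 2 statements merged into one kernel-verified Lean document; each statement's English description precedes it below -/
import Mathlib

section
/- Let r ≥ 2 be an integer and let G_1, G_2 be finite simple graphs on disjoint vertex sets. Then Σ_r(G_1 * G_2) is vertex decomposable if and only if both Σ_r(G_1) and Σ_r(G_2) are vertex decomposable, where G_1 * G_2 denotes the join of G_1 and G_2. -/
open Finset

variable {V : Type*} [Fintype V] [DecidableEq V]

/-- The induced subgraph of `G` on the finset `s` is connected. -/
def ConnOn (G : SimpleGraph V) (s : Finset V) : Prop :=
  (G.induce (s : Set V)).Connected

/-- `Supp_r(A, G)` relative to the ground (vertex) set `U`: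
all `F ⊆ U` with `|F| = r`, `F ∩ A = ∅` and `G[F ∪ A]` connected. -/
def Supp (G : SimpleGraph V) (U A : Finset V) (r : ℕ) : Set (Finset V) :=
  {F | F ⊆ U ∧ F.card = r ∧ F ∩ A = ∅ ∧ ConnOn G (F ∪ A)}

/-- The `r`-co-connected complex `Σ_r(A, G)` on ground set `U`: faces are all subsets of
sets of the form `(U \ F) \ A` with `F ∈ Supp_r(A, G)`. -/
def SigmaC (G : SimpleGraph V) (U A : Finset V) (r : ℕ) : Set (Finset V) :=
  {H | ∃ F ∈ Supp G U A r, H ⊆ (U \ F) \ A}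

/-- The circuit set of the `r`-connected clutter `Con_r(G)` on ground set `U`. -/
def ConR (G : SimpleGraph V) (U : Finset V) (r : ℕ) : Set (Finset V) :=
  {W | W ⊆ U ∧ W.card = r ∧ ConnOn G W}

/-- `Σ_r(G)`: faces are all subsets of sets of the form `U \ W`, `W ∈ Con_r(G)`. -/
def SigmaG (G : SimpleGraph V) (U : Finset V) (r : ℕ) : Set (Finset V) :=
  {H | ∃ W ∈ ConR G U r, H ⊆ U \ W}

/-- Deletion of a vertex in a simplicial complex. -/
def delC (Δ : Set (Finset V)) (x : V) : Set (Finset V) :=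
  {H | H ∈ Δ ∧ x ∉ H}

/-- Link of a vertex in a simplicial complex. -/
def linkC (Δ : Set (Finset V)) (x : V) : Set (Finset V) :=
  {H | H ∈ Δ ∧ x ∉ H ∧ insert x H ∈ Δ}

/-- A facet is a maximal face. -/
def IsFacet (Δ : Set (Finset V)) (F : Finset V) : Prop :=
  F ∈ Δ ∧ ∀ H ∈ Δ, F ⊆ H → F = H

/-- `x` is a shedding vertex: every facet of `del_Δ(x)` is a facet of `Δ`. -/
def IsShedding (Δ : Set (Finset V)) (x : V) : Prop :=
  ∀ F, IsFacet (delC Δ x) F → IsFacet Δ F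

/-- Vertex decomposability of a simplicial complex (the void complex, the empty complex and
simplices are vertex decomposable; otherwise one needs a shedding vertex whose link and
deletion are vertex decomposable). -/
inductive VD {V : Type*} [DecidableEq V] : Set (Finset V) → Prop
  | simplex (s : Finset V) : VD {t | t ⊆ s}
  | void : VD (∅ : Set (Finset V))
  | step (Δ : Set (Finset V)) (x : V) (hx : {x} ∈ Δ) (hshed : IsShedding Δ x)
      (hlink : VD (linkC Δ x)) (hdel : VD (delC Δ x)) : VD Δ

/-- The join `G₁ * G₂` of two graphs on disjoint vertex sets `U₁, U₂`: keep all edges of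
`G₁` and `G₂` and add all edges between `U₁` and `U₂`. -/
def joinGraph {V : Type*} (G₁ G₂ : SimpleGraph V) (U₁ U₂ : Finset V) : SimpleGraph V :=
  SimpleGraph.fromRel (fun a b => G₁.Adj a b ∨ G₂.Adj a b ∨ (a ∈ U₁ ∧ b ∈ U₂))

set_option linter.unusedSectionVars false
set_option linter.unusedVariables false
set_option maxHeartbeats 1000000
section AuxDev

-- ==================== auxiliary development ====================

/-- downward closed -/
def dcl (Δ : Set (Finset V)) : Prop := ∀ ⦃H H' : Finset V⦄, H ∈ Δ → H' ⊆ H → H' ∈ Δ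

lemma dcl_linkC {Δ : Set (Finset V)} (h : dcl Δ) (x : V) : dcl (linkC Δ x) := by
  rintro H H' ⟨hH, hxH, hins⟩ hsub
  exact ⟨h hH hsub, fun hx => hxH (hsub hx), h hins (insert_subset_insert _ hsub)⟩

lemma dcl_delC {Δ : Set (Finset V)} (h : dcl Δ) (x : V) : dcl (delC Δ x) := by
  rintro H H' ⟨hH, hxH⟩ hsub; exact ⟨h hH hsub, fun hx => hxH (hsub hx)⟩

lemma exists_facet {Δ : Set (Finset V)} {F : Finset V} (hF : F ∈ Δ) :
    ∃ M, F ⊆ M ∧ IsFacet Δ M := by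
  obtain ⟨M, hM, hmax⟩ := Set.Finite.exists_maximalFor Finset.card {H | H ∈ Δ ∧ F ⊆ H}
    (Set.toFinite _) ⟨F, hF, subset_rfl⟩
  refine ⟨M, hM.2, hM.1, fun H hH hMH => ?_⟩
  exact Finset.eq_of_subset_of_card_le hMH (hmax (j := H) ⟨hH, hM.2.trans hMH⟩ (card_le_card hMH))

lemma isFacet_of_del {Δ : Set (Finset V)} (hdc : dcl Δ) {x : V} {F : Finset V}
    (hF : IsFacet (delC Δ x) F) (hx : insert x F ∉ Δ) : IsFacet Δ F := by
  refine ⟨hF.1.1, fun H hH hFH => ?_⟩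
  by_cases hxH : x ∈ H
  · exact absurd (hdc hH (insert_subset hxH hFH)) hx
  · exact hF.2 H ⟨hH, hxH⟩ hFH

lemma isShedding_of {Δ : Set (Finset V)} {x : V} (hdc : dcl Δ)
    (h : ∀ F, IsFacet (delC Δ x) F → insert x F ∉ Δ) : IsShedding Δ x :=
  fun F hF => isFacet_of_del hdc hF (h F hF)

lemma isFacet_simplex_iff {s F : Finset V} : IsFacet {t | t ⊆ s} F ↔ F = s := by
  constructor
  · intro hF; exact hF.2 s (by simp [Set.mem_setOf_eq]) hF.1
  · rintro rfl; exact ⟨Set.mem_setOf.mpr subset_rfl, fun H hH hFH => subset_antisymm hFH hH⟩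

lemma vd_congr {Δ Δ' : Set (Finset V)} (h : Δ = Δ') (hvd : VD Δ) : VD Δ' := h ▸ hvd

-- ==================== the K construction ====================

/-- faces: subsets of `U \ W` for a circuit `W ∈ D`. -/
def KC (U : Finset V) (D : Set (Finset V)) : Set (Finset V) := {H | ∃ W ∈ D, H ⊆ U \ W}

lemma mem_KC {U : Finset V} {D : Set (Finset V)} {H : Finset V} :
    H ∈ KC U D ↔ ∃ W ∈ D, H ⊆ U \ W := Iff.rfl

lemma mem_KC_of {U : Finset V} {D : Set (Finset V)} {H W : Finset V} (hW : W ∈ D)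
    (hHU : H ⊆ U) (hdisj : ∀ a ∈ H, a ∉ W) : H ∈ KC U D :=
  ⟨W, hW, fun a ha => mem_sdiff.mpr ⟨hHU ha, hdisj a ha⟩⟩

lemma subset_of_mem_KC {U : Finset V} {D : Set (Finset V)} {H : Finset V}
    (h : H ∈ KC U D) : H ⊆ U := by
  obtain ⟨W, _, hsub⟩ := h; exact hsub.trans (sdiff_subset)

lemma not_mem_circ_of_mem_KC {U : Finset V} {D : Set (Finset V)} {H W : Finset V}
    (h : H ⊆ U \ W) : ∀ a ∈ H, a ∉ W := fun a ha => (mem_sdiff.mp (h ha)).2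

lemma dcl_KC (U : Finset V) (D : Set (Finset V)) : dcl (KC U D) := by
  rintro H H' ⟨W, hW, hsub⟩ h; exact ⟨W, hW, h.trans hsub⟩

lemma KC_subset_KC {U : Finset V} {D E : Set (Finset V)}
    (h : ∀ W ∈ D, ∃ W' ∈ E, W' ⊆ W) : KC U D ⊆ KC U E := by
  rintro H ⟨W, hW, hsub⟩
  obtain ⟨W', hW', hsub'⟩ := h W hW
  exact ⟨W', hW', hsub.trans (sdiff_subset_sdiff Subset.rfl hsub')⟩

lemma KC_eq_KC {U : Finset V} {D E : Set (Finset V)}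
    (h1 : ∀ W ∈ D, ∃ W' ∈ E, W' ⊆ W) (h2 : ∀ W ∈ E, ∃ W' ∈ D, W' ⊆ W) :
    KC U D = KC U E := Set.Subset.antisymm (KC_subset_KC h1) (KC_subset_KC h2)

lemma KC_empty (U : Finset V) : KC U (∅ : Set (Finset V)) = ∅ := by
  ext H; simp [mem_KC]

lemma KC_of_empty_mem {U : Finset V} {D : Set (Finset V)} (h : (∅ : Finset V) ∈ D) :
    KC U D = {t | t ⊆ U} := by
  ext H
  constructor
  · rintro ⟨W, _, hsub⟩; exact hsub.trans sdiff_subset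
  · intro hH; exact ⟨∅, h, by simpa using hH⟩

lemma KC_ground_self (U : Finset V) : KC U ({U} : Set (Finset V)) = {t | t ⊆ (∅ : Finset V)} := by
  ext H; simp [mem_KC]

lemma linkC_KC {U : Finset V} {D : Set (Finset V)} {x : V} (hx : x ∈ U) :
    linkC (KC U D) x = KC (U.erase x) {W ∈ D | x ∉ W} := by
  ext H
  constructor
  · rintro ⟨⟨W0, hW0, hsub0⟩, hxH, ⟨W, hW, hsub⟩⟩
    have hxW : x ∉ W := (mem_sdiff.mp (hsub (mem_insert_self x H))).2
    refine ⟨W, ⟨hW, hxW⟩, fun a ha => ?_⟩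
    have := hsub (mem_insert_of_mem ha)
    rw [mem_sdiff] at this
    exact mem_sdiff.mpr ⟨mem_erase.mpr ⟨fun h => hxH (h ▸ ha), this.1⟩, this.2⟩
  · rintro ⟨W, ⟨hW, hxW⟩, hsub⟩
    have hxH : x ∉ H := fun h => (mem_erase.mp (mem_sdiff.mp (hsub h)).1).1 rfl
    have hHU : ∀ a ∈ H, a ∈ U \ W := fun a ha => by
      have := mem_sdiff.mp (hsub ha); exact mem_sdiff.mpr ⟨mem_of_mem_erase this.1, this.2⟩
    refine ⟨⟨W, hW, fun a ha => hHU a ha⟩, hxH, ⟨W, hW, ?_⟩⟩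
    intro a ha
    rcases mem_insert.mp ha with rfl | ha
    · exact mem_sdiff.mpr ⟨hx, hxW⟩
    · exact hHU a ha

lemma delC_KC {U : Finset V} {D : Set (Finset V)} {x : V} :
    delC (KC U D) x = KC (U.erase x) ((fun W => W.erase x) '' D) := by
  ext H
  constructor
  · rintro ⟨⟨W, hW, hsub⟩, hxH⟩
    refine ⟨W.erase x, ⟨W, hW, rfl⟩, fun a ha => ?_⟩
    have h' := mem_sdiff.mp (hsub ha)
    exact mem_sdiff.mpr ⟨mem_erase.mpr ⟨fun h => hxH (h ▸ ha), h'.1⟩,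
      fun h => h'.2 (mem_of_mem_erase h)⟩
  · rintro ⟨W', ⟨W, hW, rfl⟩, hsub⟩
    have hxH : x ∉ H := fun h => (mem_erase.mp (mem_sdiff.mp (hsub h)).1).1 rfl
    refine ⟨⟨W, hW, fun a ha => ?_⟩, hxH⟩
    have h' := mem_sdiff.mp (hsub ha)
    refine mem_sdiff.mpr ⟨mem_of_mem_erase h'.1, fun haW => h'.2 (mem_erase.mpr ⟨?_, haW⟩)⟩
    exact fun h => hxH (h ▸ ha)

-- ==================== links of VD complexes are VD ====================

lemma not_mem_insert_of {x y : V} {H : Finset V} (hxy : y ≠ x) (hyH : y ∉ H) :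
    y ∉ insert x H := fun h => (mem_insert.mp h).elim (fun h' => hxy h') hyH

lemma linkC_delC_comm {Δ : Set (Finset V)} {x y : V} (hxy : x ≠ y) :
    linkC (delC Δ y) x = delC (linkC Δ x) y := by
  ext H
  simp only [linkC, delC, Set.mem_setOf_eq]
  constructor
  · rintro ⟨⟨hH, hyH⟩, hxH, hins, hyins⟩
    exact ⟨⟨hH, hxH, hins⟩, hyH⟩
  · rintro ⟨⟨hH, hxH, hins⟩, hyH⟩
    exact ⟨⟨hH, hyH⟩, hxH, hins, not_mem_insert_of (fun h => hxy h.symm) hyH⟩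

lemma linkC_linkC_comm {Δ : Set (Finset V)} (hdc : dcl Δ) (x y : V) :
    linkC (linkC Δ y) x = linkC (linkC Δ x) y := by
  have key : ∀ a b : V, linkC (linkC Δ b) a ⊆ linkC (linkC Δ a) b := by
    intro a b H hmem
    obtain ⟨⟨hH, hbH, hinsb⟩, haH, ⟨hinsa, hbinsa, hcomm⟩⟩ := hmem
    have hab : insert a (insert b H) = insert b (insert a H) := Finset.insert_comm a b H
    have hne : a ≠ b := fun h => hbinsa (h ▸ mem_insert_self a H)
    exact ⟨⟨hH, haH, hinsa⟩, hbH, ⟨hinsb, not_mem_insert_of hne haH, hab ▸ hcomm⟩⟩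
  exact Set.Subset.antisymm (key x y) (key y x)

lemma vd_linkC {Δ : Set (Finset V)} (hvd : VD Δ) : dcl Δ → ∀ x : V, VD (linkC Δ x) := by
  induction hvd with
  | simplex s =>
    intro _ x
    by_cases hx : x ∈ s
    · have : linkC {t | t ⊆ s} x = {t | t ⊆ s.erase x} := by
        ext H
        simp only [linkC, Set.mem_setOf_eq]
        constructor
        · rintro ⟨hH, hxH, hins⟩
          exact subset_erase.mpr ⟨hH, hxH⟩
        · intro h
          obtain ⟨hH, hxH⟩ := subset_erase.mp h
          exact ⟨hH, hxH, insert_subset hx hH⟩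
      exact vd_congr this.symm (VD.simplex _)
    · have : linkC {t | t ⊆ s} x = ∅ := by
        ext H
        simp only [linkC, Set.mem_setOf_eq, Set.mem_empty_iff_false, iff_false, not_and]
        intro _ _ hins
        exact hx (hins (mem_insert_self x H))
      exact vd_congr this.symm VD.void
  | void =>
    intro _ x
    have : linkC (∅ : Set (Finset V)) x = ∅ := by ext H; simp [linkC]
    exact vd_congr this.symm VD.void
  | step Δ y hy hshed hlk hdel IHlk IHdel =>
    intro hdc x
    by_cases hxy : x = y
    · exact hxy ▸ hlk
    · by_cases hin : insert x {y} ∈ Δ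
      · -- y is a shedding vertex of linkC Δ x
        refine VD.step _ y ⟨hdc hin (by simp), fun h => hxy ((mem_singleton.mp h).symm ▸ rfl), ?_⟩
          ?_ ?_ ?_
        · exact hin
        · -- shedding
          intro F hF
          have hFlk : F ∈ linkC Δ x := hF.1.1
          have hyF : y ∉ F := hF.1.2
          have hins_not : insert y F ∉ linkC Δ x := by
            intro hinsy
            obtain ⟨hyF_mem, hxyF, hxyins⟩ := hinsy
            -- extend insert x F to a facet of delC Δ y
            have hmem : insert x F ∈ delC Δ y := by
              refine ⟨hFlk.2.2, ?_⟩
              intro h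
              rcases mem_insert.mp h with h | h
              · exact hxy h.symm
              · exact hyF h
            obtain ⟨M, hsubM, hMfacet⟩ := exists_facet hmem
            have hMΔfacet : IsFacet Δ M := hshed M hMfacet
            have hyMins : insert y M ∉ Δ := by
              intro h
              have := hMΔfacet.2 _ h (subset_insert _ _)
              exact hMfacet.1.2 (this ▸ mem_insert_self y M)
            have hxM : x ∈ M := hsubM (mem_insert_self x F)
            have hM' : M.erase x ∈ delC (linkC Δ x) y := by
              refine ⟨⟨hdc hMΔfacet.1 (erase_subset _ _), notMem_erase _ _, ?_⟩, ?_⟩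
              · rw [insert_erase hxM]; exact hMΔfacet.1
              · exact fun h => hMfacet.1.2 (mem_of_mem_erase h)
            have hFM' : F ⊆ M.erase x := by
              intro a ha
              exact mem_erase.mpr ⟨fun h => (hFlk.2.1) (h ▸ ha), hsubM (mem_insert_of_mem ha)⟩
            have hFeq : F = M.erase x := hF.2 _ hM' hFM'
            have hMeq : M = insert x F := by
              rw [hFeq, insert_erase hxM]
            apply hyMins
            rw [hMeq, Finset.insert_comm]
            exact hxyins
          exact isFacet_of_del (dcl_linkC hdc x) hF hins_not
        · exact vd_congr (linkC_linkC_comm hdc x y) (IHlk (dcl_linkC hdc y) x)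
        · exact vd_congr (linkC_delC_comm (fun h => hxy h)) (IHdel (dcl_delC hdc y) x)
      · -- x,y not both in a face: linkC Δ x = linkC (delC Δ y) x
        have heq : linkC Δ x = linkC (delC Δ y) x := by
          ext H
          simp only [linkC, delC, Set.mem_setOf_eq]
          constructor
          · rintro ⟨hH, hxH, hins⟩
            have hyH : y ∉ H := by
              intro hyH
              exact hin (hdc hins (insert_subset (mem_insert_self x H)
                (singleton_subset_iff.mpr (mem_insert_of_mem hyH))))
            exact ⟨⟨hH, hyH⟩, hxH, hins, not_mem_insert_of (fun h => hxy h.symm) hyH⟩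
          · rintro ⟨⟨hH, _⟩, hxH, hins, _⟩
            exact ⟨hH, hxH, hins⟩
        exact vd_congr heq.symm (IHdel (dcl_delC hdc y) x)

-- ==================== choosing a shedding vertex ====================

lemma pick_shedding {A : Finset V} {D : Set (Finset V)}
    (hD : ∀ W ∈ D, W ⊆ A ∧ W.Nonempty) (hA : A.Nonempty) (hvd : VD (KC A D)) :
    ∃ x ∈ A, IsShedding (KC A D) x ∧ VD (linkC (KC A D) x) ∧ VD (delC (KC A D) x) := by
  generalize hE : KC A D = Δ at hvd ⊢
  cases hvd with
  | void =>
    obtain ⟨x, hxA⟩ := hA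
    have hlk : linkC (∅ : Set (Finset V)) x = ∅ := by ext H; simp [linkC]
    have hdl : delC (∅ : Set (Finset V)) x = ∅ := by ext H; simp [delC]
    refine ⟨x, hxA, ?_, vd_congr hlk.symm VD.void, vd_congr hdl.symm VD.void⟩
    intro F hF
    rw [hdl] at hF
    exact absurd hF.1 (Set.notMem_empty F)
  | simplex s =>
    have hsmem : s ∈ KC A D := by rw [hE]; exact Set.mem_setOf.mpr subset_rfl
    obtain ⟨W, hW, hsub⟩ := hsmem
    obtain ⟨x, hxW⟩ := (hD W hW).2
    have hxA : x ∈ A := (hD W hW).1 hxW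
    have hxs : x ∉ s := fun h => (mem_sdiff.mp (hsub h)).2 hxW
    have hxfaces : ∀ H : Finset V, H ∈ {t : Finset V | t ⊆ s} → x ∉ H := by
      intro H hH hx
      exact hxs (hH hx)
    have hdl : delC {t : Finset V | t ⊆ s} x = {t : Finset V | t ⊆ s} := by
      ext H
      exact ⟨fun h => h.1, fun h => ⟨h, hxfaces H h⟩⟩
    have hlk : linkC {t : Finset V | t ⊆ s} x = ∅ := by
      ext H
      simp only [linkC, Set.mem_setOf_eq, Set.mem_empty_iff_false, iff_false, not_and]
      intro _ _ hins
      exact hxfaces _ hins (mem_insert_self x H)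
    refine ⟨x, hxA, ?_, vd_congr hlk.symm VD.void, vd_congr hdl.symm (VD.simplex s)⟩
    intro F hF
    rw [hdl] at hF
    exact hF
  | step Δ x hx hshed hlink hdel =>
    have hxA : x ∈ A := by
      rw [← hE] at hx
      obtain ⟨W, _, hsub⟩ := hx
      exact (mem_sdiff.mp (hsub (mem_singleton_self x))).1
    exact ⟨x, hxA, hshed, hlink, hdel⟩

-- ==================== skeleta ====================

def allC (s : ℕ) (U : Finset V) : Set (Finset V) := {W | W ⊆ U ∧ W.card = s}

lemma vd_skel : ∀ (n : ℕ) (U : Finset V) (s : ℕ), U.card ≤ n → VD (KC U (allC s U)) := by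
  intro n
  induction n with
  | zero =>
    intro U s hU
    have hU0 : U = ∅ := card_eq_zero.mp (Nat.le_zero.mp hU)
    subst hU0
    rcases Nat.eq_zero_or_pos s with rfl | hs
    · exact vd_congr (KC_of_empty_mem (by simp [allC])).symm (VD.simplex ∅)
    · have : KC (∅ : Finset V) (allC s ∅) = ∅ := by
        ext H
        simp only [mem_KC, allC, Set.mem_setOf_eq, Set.mem_empty_iff_false, iff_false, not_exists]
        rintro W ⟨⟨hW, hcard⟩, _⟩
        rw [subset_empty.mp hW, card_empty] at hcard
        omega
      exact vd_congr this.symm VD.void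
  | succ n IH =>
    intro U s hU
    rcases Nat.eq_zero_or_pos s with rfl | hs
    · exact vd_congr (KC_of_empty_mem (by simp [allC])).symm (VD.simplex U)
    rcases lt_trichotomy U.card s with hlt | heq | hgt
    · have : KC U (allC s U) = ∅ := by
        ext H
        simp only [mem_KC, allC, Set.mem_setOf_eq, Set.mem_empty_iff_false, iff_false, not_exists]
        rintro W ⟨⟨hW, hcard⟩, _⟩
        have := card_le_card hW
        omega
      exact vd_congr this.symm VD.void
    · have hcirc : allC s U = {U} := by
        ext W
        simp only [allC, Set.mem_setOf_eq, Set.mem_singleton_iff]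
        constructor
        · rintro ⟨hW, hcard⟩
          exact Finset.eq_of_subset_of_card_le hW (by omega)
        · rintro rfl; exact ⟨subset_rfl, heq⟩
      rw [hcirc, KC_ground_self]
      exact VD.simplex ∅
    · -- card U > s ≥ 1
      obtain ⟨x, hxU⟩ := card_pos.mp (show 0 < U.card by omega)
      have hUx : (U.erase x).card = U.card - 1 := card_erase_of_mem hxU
      have hlk : linkC (KC U (allC s U)) x = KC (U.erase x) (allC s (U.erase x)) := by
        have hset : {W ∈ allC s U | x ∉ W} = allC s (U.erase x) := by
          ext W
          simp only [allC, Set.mem_setOf_eq, Set.mem_sep_iff, subset_erase]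
          tauto
        rw [linkC_KC hxU, hset]
      have hdl : delC (KC U (allC s U)) x = KC (U.erase x) (allC (s-1) (U.erase x)) := by
        rw [delC_KC]
        apply KC_eq_KC
        · rintro W' ⟨W, ⟨hWU, hWcard⟩, rfl⟩
          by_cases hxW : x ∈ W
          · exact ⟨W.erase x, ⟨erase_subset_erase _ hWU,
              by rw [card_erase_of_mem hxW, hWcard]⟩, subset_rfl⟩
          · obtain ⟨T, hTW, hTcard⟩ := Finset.exists_subset_card_eq (n := s - 1)
              (show s - 1 ≤ W.card by omega)
            exact ⟨T, ⟨hTW.trans ((subset_erase).mpr ⟨hWU, hxW⟩), hTcard⟩,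
              by simpa [erase_eq_of_notMem hxW] using hTW⟩
        · rintro W ⟨hWU, hWcard⟩
          refine ⟨W, ⟨insert x W, ⟨insert_subset hxU ((hWU.trans (erase_subset _ _))),
            ?_⟩, ?_⟩, subset_rfl⟩
          · rw [card_insert_of_notMem (fun h => (mem_erase.mp (hWU h)).1 rfl)]
            omega
          · dsimp only
            exact erase_insert (fun h => (mem_erase.mp (hWU h)).1 rfl)
      have hxK : ({x} : Finset V) ∈ KC U (allC s U) := by
        obtain ⟨T, hTU, hTcard⟩ := Finset.exists_subset_card_eq (n := s)
          (show s ≤ (U.erase x).card by omega)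
        refine mem_KC_of ⟨hTU.trans (erase_subset _ _), hTcard⟩ (by simpa using hxU) ?_
        intro a ha hamem
        rw [mem_singleton] at ha
        exact (mem_erase.mp (hTU hamem)).1 (ha ▸ rfl)
      refine VD.step _ x hxK ?_ ?_ ?_
      · apply isShedding_of (dcl_KC _ _)
        intro F hF hins
        rw [hdl] at hF
        obtain ⟨W, ⟨hWU, hWcard⟩, hsub⟩ := hins
        have hxW : x ∉ W := (mem_sdiff.mp (hsub (mem_insert_self x F))).2
        obtain ⟨y, hyW⟩ := card_pos.mp (show 0 < W.card by omega)
        have hW' : W.erase y ∈ allC (s-1) (U.erase x) := by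
          refine ⟨(erase_subset _ _).trans (subset_erase.mpr ⟨hWU, hxW⟩),
            by rw [card_erase_of_mem hyW]; omega⟩
        have hymem : insert y F ∈ KC (U.erase x) (allC (s-1) (U.erase x)) := by
          refine ⟨W.erase y, hW', insert_subset ?_ ?_⟩
          · exact mem_sdiff.mpr ⟨mem_erase.mpr ⟨fun h => hxW (h ▸ hyW), hWU hyW⟩,
              notMem_erase _ _⟩
          · refine (subset_sdiff.mpr ⟨?_, ?_⟩)
            · exact subset_of_mem_KC hF.1
            · rw [disjoint_right]
              intro a haW haF
              exact (mem_sdiff.mp (hsub (mem_insert_of_mem haF))).2 (mem_of_mem_erase haW)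
        have : F = insert y F := hF.2 _ hymem (subset_insert _ _)
        have hyF : y ∈ F := this ▸ mem_insert_self y F
        exact (mem_sdiff.mp (hsub (mem_insert_of_mem hyF))).2 hyW
      · exact vd_congr hlk.symm (IH (U.erase x) s (by omega))
      · exact vd_congr hdl.symm (IH (U.erase x) (s-1) (by omega))

-- ==================== cross circuits ====================

def crA (s : ℕ) (A U : Finset V) : Set (Finset V) :=
  {W | W ⊆ U ∧ W.card = s ∧ (W ∩ A).Nonempty}

def crB (r : ℕ) (A B : Finset V) : Set (Finset V) :=
  {W | W ⊆ A ∪ B ∧ W.card = r ∧ (W ∩ A).Nonempty ∧ (W ∩ B).Nonempty}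

lemma vd_phi : ∀ (n : ℕ) (s : ℕ) (A B : Finset V) (D : Set (Finset V)),
    (A ∪ B).card ≤ n → 1 ≤ s → Disjoint A B →
    (∀ W ∈ D, W ⊆ B ∧ s ≤ W.card) → VD (KC B D) →
    VD (KC (A ∪ B) (crA s A (A ∪ B) ∪ D)) := by
  intro n
  induction n with
  | zero =>
    intro s A B D hcard hs hdisj hD hvdB
    have hAB : A ∪ B = ∅ := card_eq_zero.mp (Nat.le_zero.mp hcard)
    have hA : A = ∅ := union_eq_empty.mp hAB |>.1
    have hB : B = ∅ := union_eq_empty.mp hAB |>.2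
    have hcr : crA s A (A ∪ B) = ∅ := by
      ext W
      simp only [crA, Set.mem_setOf_eq, Set.mem_empty_iff_false, iff_false, not_and]
      intro _ hc
      rw [hA]
      simp
    rw [hcr, Set.empty_union, hAB]
    rw [hB] at hvdB
    exact hvdB
  | succ n IH =>
    intro s A B D hcard hs hdisj hD hvdB
    by_cases hA : A = ∅
    · have hcr : crA s A (A ∪ B) = ∅ := by
        ext W
        simp only [crA, Set.mem_setOf_eq, Set.mem_empty_iff_false, iff_false, not_and]
        intro _ hc
        rw [hA]
        simp
      rw [hcr, Set.empty_union, hA, empty_union]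
      exact hvdB
    · obtain ⟨a, haA⟩ := nonempty_iff_ne_empty.mpr hA
      have haB : a ∉ B := disjoint_left.mp hdisj haA
      have haU : a ∈ A ∪ B := mem_union_left _ haA
      by_cases hs1 : s = 1
      · subst hs1
        -- shed a ∈ A; deletion is a full simplex
        have hdl : delC (KC (A ∪ B) (crA 1 A (A ∪ B) ∪ D)) a
            = {t : Finset V | t ⊆ (A ∪ B).erase a} := by
          rw [delC_KC]
          apply KC_of_empty_mem
          refine ⟨{a}, Or.inl ⟨singleton_subset_iff.mpr haU, card_singleton a,
            ⟨a, mem_inter.mpr ⟨mem_singleton_self a, haA⟩⟩⟩, ?_⟩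
          simp
        by_cases hrest : (A.erase a).Nonempty ∨ D.Nonempty
        · -- VD.step at a
          have hxK : ({a} : Finset V) ∈ KC (A ∪ B) (crA 1 A (A ∪ B) ∪ D) := by
            rcases hrest with ⟨a', ha'⟩ | ⟨W, hW⟩
            · refine mem_KC_of (W := {a'})
                (Or.inl ⟨singleton_subset_iff.mpr (mem_union_left _ (mem_of_mem_erase ha')),
                  card_singleton a', ⟨a', mem_inter.mpr ⟨mem_singleton_self a',
                    mem_of_mem_erase ha'⟩⟩⟩)
                (singleton_subset_iff.mpr haU) ?_
              intro b hb hbW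
              rw [mem_singleton] at hb hbW
              exact (mem_erase.mp ha').1 (hbW.symm.trans hb)
            · refine mem_KC_of (Or.inr hW) (singleton_subset_iff.mpr haU) ?_
              intro b hb hbW
              rw [mem_singleton] at hb
              exact haB ((hD W hW).1 (hb ▸ hbW))
          refine VD.step _ a hxK ?_ ?_ ?_
          · -- shedding
            apply isShedding_of (dcl_KC _ _)
            intro F hF hins
            rw [hdl] at hF
            have hFeq : F = (A ∪ B).erase a := isFacet_simplex_iff.mp hF
            rw [hFeq, insert_erase haU] at hins
            obtain ⟨W, hW, hsub⟩ := hins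
            have hWne : W.Nonempty := by
              rcases hW with ⟨_, hc, _⟩ | hWD
              · exact card_pos.mp (by omega)
              · exact card_pos.mp (lt_of_lt_of_le (by omega) (hD W hWD).2)
            have hWU : W ⊆ A ∪ B := by
              rcases hW with ⟨h, _, _⟩ | hWD
              · exact h
              · exact (hD W hWD).1.trans subset_union_right
            obtain ⟨w, hw⟩ := hWne
            exact (mem_sdiff.mp (hsub (hWU hw))).2 hw
          · -- link
            have hg : (A ∪ B).erase a = A.erase a ∪ B := by
              rw [erase_union_distrib, erase_eq_of_notMem haB]
            have hcircs : {W ∈ crA 1 A (A ∪ B) ∪ D | a ∉ W}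
                = crA 1 (A.erase a) (A.erase a ∪ B) ∪ D := by
              ext W
              simp only [Set.mem_sep_iff, Set.mem_union, crA, Set.mem_setOf_eq]
              constructor
              · rintro ⟨⟨hWU, hWc, ⟨w, hwmem⟩⟩ | hWD, haW⟩
                · obtain ⟨hwW, hwA⟩ := mem_inter.mp hwmem
                  refine Or.inl ⟨?_, hWc, ⟨w, mem_inter.mpr ⟨hwW,
                    mem_erase.mpr ⟨fun h => haW (h ▸ hwW), hwA⟩⟩⟩⟩
                  rw [← hg]
                  exact subset_erase.mpr ⟨hWU, haW⟩
                · exact Or.inr hWD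
              · rintro (⟨hWU, hWc, ⟨w, hwmem⟩⟩ | hWD)
                · obtain ⟨hwW, hwA⟩ := mem_inter.mp hwmem
                  have haW : a ∉ W := by
                    intro h
                    have := hWU h
                    rw [← hg] at this
                    exact (mem_erase.mp this).1 rfl
                  exact ⟨Or.inl ⟨hWU.trans (by rw [← hg]; exact erase_subset _ _),
                    hWc, ⟨w, mem_inter.mpr ⟨hwW, mem_of_mem_erase hwA⟩⟩⟩, haW⟩
                · refine ⟨Or.inr hWD, fun h => haB ((hD W hWD).1 h)⟩
            have hlk : linkC (KC (A ∪ B) (crA 1 A (A ∪ B) ∪ D)) a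
                = KC (A.erase a ∪ B) (crA 1 (A.erase a) (A.erase a ∪ B) ∪ D) := by
              rw [linkC_KC haU, hcircs, hg]
            refine vd_congr hlk.symm (IH 1 (A.erase a) B D ?_ le_rfl
              (hdisj.mono_left (erase_subset _ _)) hD hvdB)
            have : (A.erase a ∪ B).card = ((A ∪ B).erase a).card := by
              rw [erase_union_distrib, erase_eq_of_notMem haB]
            rw [this, card_erase_of_mem haU]
            omega
          · exact vd_congr hdl.symm (VD.simplex _)
        · -- base: A = {a}, D = ∅; the complex is a simplex
          push_neg at hrest
          obtain ⟨hAa, hD0⟩ := hrest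
          have hAeq : A = {a} := by
            rcases (erase_eq_empty_iff A a).mp hAa with h | h
            · exact absurd h hA
            · exact h
          have hD0' : D = ∅ := hD0
          have hcircs : crA 1 A (A ∪ B) ∪ D = {({a} : Finset V)} := by
            rw [hD0', Set.union_empty]
            ext W
            simp only [crA, Set.mem_setOf_eq, Set.mem_singleton_iff]
            constructor
            · rintro ⟨hWU, hWc, ⟨w, hwmem⟩⟩
              obtain ⟨hwW, hwA⟩ := mem_inter.mp hwmem
              obtain ⟨b, hb⟩ := card_eq_one.mp hWc
              subst hb
              rw [mem_singleton] at hwW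
              rw [hAeq, mem_singleton] at hwA
              rw [← hwW, hwA]
            · rintro rfl
              exact ⟨singleton_subset_iff.mpr haU, card_singleton a,
                ⟨a, mem_inter.mpr ⟨mem_singleton_self a, haA⟩⟩⟩
          have hK : KC (A ∪ B) (crA 1 A (A ∪ B) ∪ D) = {t : Finset V | t ⊆ (A ∪ B).erase a} := by
            rw [hcircs]
            ext H
            simp only [mem_KC, Set.mem_singleton_iff, Set.mem_setOf_eq]
            constructor
            · rintro ⟨W, rfl, hsub⟩
              rwa [← erase_eq] at hsub
            · intro h
              exact ⟨{a}, rfl, by rwa [erase_eq] at h⟩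
          exact vd_congr hK.symm (VD.simplex _)
      · -- s ≥ 2
        have hs2 : 2 ≤ s := by omega
        by_cases hB : B = ∅
        · -- skeleton
          have hD0 : D = ∅ := by
            ext W
            simp only [Set.mem_empty_iff_false, iff_false]
            intro hW
            have h1 := (hD W hW).1
            have h2 := (hD W hW).2
            rw [hB, subset_empty] at h1
            rw [h1, card_empty] at h2
            omega
          have hcircs : crA s A (A ∪ B) ∪ D = allC s (A ∪ B) := by
            rw [hD0, Set.union_empty, hB, union_empty]
            ext W
            simp only [crA, allC, Set.mem_setOf_eq]
            constructor
            · rintro ⟨h1, h2, _⟩; exact ⟨h1, h2⟩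
            · rintro ⟨h1, h2⟩
              refine ⟨h1, h2, ?_⟩
              rw [inter_eq_left.mpr h1]
              exact card_pos.mp (by omega)
          rw [hcircs]
          exact vd_skel (n+1) _ s hcard
        · obtain ⟨b₀, hb₀⟩ := nonempty_iff_ne_empty.mpr hB
          rcases lt_trichotomy ((A ∪ B).card) s with hlt | heqc | hgt
          · -- void
            have : KC (A ∪ B) (crA s A (A ∪ B) ∪ D) = ∅ := by
              ext H
              simp only [mem_KC, Set.mem_empty_iff_false, iff_false, not_exists]
              rintro W ⟨(⟨hWU, hWc, _⟩ | hWD), _⟩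
              · have := card_le_card hWU; omega
              · have h1 : W.card ≤ (A ∪ B).card :=
                  card_le_card ((hD W hWD).1.trans subset_union_right)
                have h2 := (hD W hWD).2
                omega
            exact vd_congr this.symm VD.void
          · -- simplex {∅}
            have hBU : B ⊂ A ∪ B := by
              refine ssubset_iff_of_subset subset_union_right |>.mpr ⟨a, haU, haB⟩
            have hD0 : D = ∅ := by
              ext W
              simp only [Set.mem_empty_iff_false, iff_false]
              intro hW
              have h1 := card_le_card ((hD W hW).1)
              have h2 := (hD W hW).2
              have h3 := card_lt_card hBU
              omega
            have hcircs : crA s A (A ∪ B) ∪ D = {A ∪ B} := by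
              rw [hD0, Set.union_empty]
              ext W
              simp only [crA, Set.mem_setOf_eq, Set.mem_singleton_iff]
              constructor
              · rintro ⟨hWU, hWc, _⟩
                exact Finset.eq_of_subset_of_card_le hWU (by omega)
              · rintro rfl
                exact ⟨subset_rfl, heqc, ⟨a, mem_inter.mpr ⟨haU, haA⟩⟩⟩
            rw [hcircs, KC_ground_self]
            exact VD.simplex ∅
          · -- the main case: pick a shedding vertex x ∈ B
            obtain ⟨x, hxB, hshedB, hvdlkB, hvddelB⟩ :=
              pick_shedding (A := B) (D := D)
                (fun W hW => ⟨(hD W hW).1,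
                  card_pos.mp (lt_of_lt_of_le (by omega) (hD W hW).2)⟩)
                (nonempty_iff_ne_empty.mpr hB) hvdB
            have hxA : x ∉ A := disjoint_right.mp hdisj hxB
            have hxU : x ∈ A ∪ B := mem_union_right _ hxB
            have hg : (A ∪ B).erase x = A ∪ B.erase x := by
              rw [erase_union_distrib, erase_eq_of_notMem hxA]
            have hgsub : A ∪ B.erase x ⊆ A ∪ B := by
              rw [← hg]; exact erase_subset _ _
            have hxg : x ∉ A ∪ B.erase x := by
              rw [← hg]; exact notMem_erase _ _
            -- link
            have hlkcirc : {W ∈ crA s A (A ∪ B) ∪ D | x ∉ W}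
                = crA s A (A ∪ B.erase x) ∪ {W ∈ D | x ∉ W} := by
              ext W
              simp only [Set.mem_sep_iff, Set.mem_union, crA, Set.mem_setOf_eq]
              constructor
              · rintro ⟨⟨hWU, hWc, hWA⟩ | hWD, hxW⟩
                · exact Or.inl ⟨by rw [← hg]; exact subset_erase.mpr ⟨hWU, hxW⟩, hWc, hWA⟩
                · exact Or.inr ⟨hWD, hxW⟩
              · rintro (⟨hWU, hWc, hWA⟩ | ⟨hWD, hxW⟩)
                · exact ⟨Or.inl ⟨hWU.trans hgsub, hWc, hWA⟩, fun h => hxg (hWU h)⟩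
                · exact ⟨Or.inr hWD, hxW⟩
            have hlk : linkC (KC (A ∪ B) (crA s A (A ∪ B) ∪ D)) x
                = KC (A ∪ B.erase x) (crA s A (A ∪ B.erase x) ∪ {W ∈ D | x ∉ W}) := by
              rw [linkC_KC hxU, hlkcirc, hg]
            -- deletion
            have hdl : delC (KC (A ∪ B) (crA s A (A ∪ B) ∪ D)) x
                = KC (A ∪ B.erase x)
                    (crA (s-1) A (A ∪ B.erase x) ∪ ((fun W => W.erase x) '' D)) := by
              rw [delC_KC, hg]
              apply KC_eq_KC
              · rintro W' ⟨W, hW, rfl⟩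
                rcases hW with ⟨hWU, hWc, ⟨w, hwmem⟩⟩ | hWD
                · obtain ⟨hwW, hwA⟩ := mem_inter.mp hwmem
                  by_cases hxW : x ∈ W
                  · have hm : W.erase x ∈ crA (s-1) A (A ∪ B.erase x) := by
                      refine ⟨by rw [← hg]; exact erase_subset_erase _ hWU,
                        by rw [card_erase_of_mem hxW, hWc], ⟨w, mem_inter.mpr
                          ⟨mem_erase.mpr ⟨fun h => hxA (h ▸ hwA), hwW⟩, hwA⟩⟩⟩
                    exact ⟨W.erase x, Or.inl hm, subset_rfl⟩
                  · obtain ⟨y, hyW, hyne⟩ :=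
                      Finset.exists_mem_ne (show 1 < W.card by omega) w
                    have hsub1 : W.erase y ⊆ A ∪ B.erase x := by
                      rw [← hg]
                      exact (erase_subset _ _).trans (subset_erase.mpr ⟨hWU, hxW⟩)
                    have hm : W.erase y ∈ crA (s-1) A (A ∪ B.erase x) :=
                      ⟨hsub1, by rw [card_erase_of_mem hyW, hWc],
                        ⟨w, mem_inter.mpr ⟨mem_erase.mpr ⟨hyne.symm, hwW⟩, hwA⟩⟩⟩
                    refine ⟨W.erase y, Or.inl hm, ?_⟩
                    dsimp only
                    rw [erase_eq_of_notMem hxW]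
                    exact erase_subset _ _
                · exact ⟨W.erase x, Or.inr ⟨W, hWD, rfl⟩, subset_rfl⟩
              · rintro W hW
                rcases hW with ⟨hWU, hWc, hWA⟩ | hWimg
                · have hxW : x ∉ W := fun h => hxg (hWU h)
                  have hm : insert x W ∈ crA s A (A ∪ B) ∪ D := by
                    refine Or.inl ⟨insert_subset hxU (hWU.trans hgsub),
                      by rw [card_insert_of_notMem hxW]; omega, ?_⟩
                    obtain ⟨w, hw⟩ := hWA
                    exact ⟨w, mem_inter.mpr ⟨mem_insert_of_mem (mem_inter.mp hw).1,
                      (mem_inter.mp hw).2⟩⟩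
                  refine ⟨(insert x W).erase x, ⟨insert x W, hm, rfl⟩, ?_⟩
                  rw [erase_insert hxW]
                · obtain ⟨W₀, hW₀, rfl⟩ := hWimg
                  exact ⟨W₀.erase x, ⟨W₀, Or.inr hW₀, rfl⟩, subset_rfl⟩
            have hxK : ({x} : Finset V) ∈ KC (A ∪ B) (crA s A (A ∪ B) ∪ D) := by
              by_cases hDx : ∃ W ∈ D, x ∉ W
              · obtain ⟨W, hW, hxW⟩ := hDx
                refine mem_KC_of (Or.inr hW) (singleton_subset_iff.mpr hxU) ?_
                intro b hb
                rw [mem_singleton] at hb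
                subst hb; exact hxW
              · obtain ⟨W, hWsup, hWsub, hWcard⟩ := Finset.exists_subsuperset_card_eq
                  (show {a} ⊆ (A ∪ B).erase x from singleton_subset_iff.mpr
                    (mem_erase.mpr ⟨fun h => hxA (h ▸ haA), haU⟩))
                  (by simpa using hs) (by rw [card_erase_of_mem hxU]; omega)
                refine mem_KC_of (W := W) (Or.inl ⟨hWsub.trans (erase_subset _ _), hWcard,
                  ⟨a, mem_inter.mpr ⟨hWsup (mem_singleton_self a), haA⟩⟩⟩)
                  (singleton_subset_iff.mpr hxU) ?_
                intro b hb hbW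
                rw [mem_singleton] at hb
                exact (mem_erase.mp (hWsub hbW)).1 hb
            refine VD.step _ x hxK ?_ ?_ ?_
            · apply isShedding_of (dcl_KC _ _)
              intro F hF hins
              rw [hdl] at hF
              have hFg : F ⊆ A ∪ B.erase x := subset_of_mem_KC hF.1
              have hxF : x ∉ F := fun h => hxg (hFg h)
              obtain ⟨W, hWmem, hsub⟩ := hins
              have hxW : x ∉ W := (mem_sdiff.mp (hsub (mem_insert_self _ _))).2
              have hFW : ∀ b ∈ F, b ∉ W := fun b hb =>
                (mem_sdiff.mp (hsub (mem_insert_of_mem hb))).2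
              rcases hWmem with ⟨hWU, hWc, ⟨w, hwmem⟩⟩ | hWD
              · obtain ⟨hwW, hwA⟩ := mem_inter.mp hwmem
                obtain ⟨y, hyW, hyne⟩ := Finset.exists_mem_ne (show 1 < W.card by omega) w
                have hsub1 : W.erase y ⊆ A ∪ B.erase x := by
                  rw [← hg]
                  exact (erase_subset _ _).trans (subset_erase.mpr ⟨hWU, hxW⟩)
                have hm : W.erase y ∈ crA (s-1) A (A ∪ B.erase x) :=
                  ⟨hsub1, by rw [card_erase_of_mem hyW, hWc],
                    ⟨w, mem_inter.mpr ⟨mem_erase.mpr ⟨hyne.symm, hwW⟩, hwA⟩⟩⟩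
                have hymem : insert y F ∈ KC (A ∪ B.erase x)
                    (crA (s-1) A (A ∪ B.erase x) ∪ ((fun W => W.erase x) '' D)) := by
                  refine ⟨W.erase y, Or.inl hm, insert_subset ?_ ?_⟩
                  · refine mem_sdiff.mpr ⟨?_, notMem_erase _ _⟩
                    rw [← hg]
                    exact mem_erase.mpr ⟨fun h => hxW (h ▸ hyW), hWU hyW⟩
                  · intro b hb
                    exact mem_sdiff.mpr ⟨hFg hb, fun h => hFW b hb (mem_of_mem_erase h)⟩
                have heqy := hF.2 _ hymem (subset_insert _ _)
                exact hFW y (heqy ▸ mem_insert_self y F) hyW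
              · have hWB : W ⊆ B := (hD W hWD).1
                have hWimg : W ∈ ((fun W => W.erase x) '' D) :=
                  ⟨W, hWD, erase_eq_of_notMem hxW⟩
                have hFBmem : F ∩ B ∈ KC (B.erase x) ((fun W => W.erase x) '' D) := by
                  refine ⟨W, hWimg, ?_⟩
                  intro b hb
                  obtain ⟨hbF, hbB⟩ := mem_inter.mp hb
                  exact mem_sdiff.mpr ⟨mem_erase.mpr ⟨fun h => hxF (h ▸ hbF), hbB⟩, hFW b hbF⟩
                have hFBfacet : IsFacet (KC (B.erase x) ((fun W => W.erase x) '' D)) (F ∩ B) := by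
                  refine ⟨hFBmem, ?_⟩
                  intro H' hH' hsubH'
                  have hH'B : H' ⊆ B.erase x := subset_of_mem_KC hH'
                  obtain ⟨W₂, hW₂img, hsubW₂⟩ := hH'
                  have hW₂B : W₂ ⊆ B.erase x := by
                    obtain ⟨W₀, hW₀, rfl⟩ := hW₂img
                    exact erase_subset_erase _ (hD W₀ hW₀).1
                  have hmem2 : F ∪ H' ∈ KC (A ∪ B.erase x)
                      (crA (s-1) A (A ∪ B.erase x) ∪ ((fun W => W.erase x) '' D)) := by
                    refine ⟨W₂, Or.inr hW₂img, union_subset ?_ ?_⟩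
                    · intro b hb
                      refine mem_sdiff.mpr ⟨hFg hb, fun hbW₂ => ?_⟩
                      have hbB : b ∈ B := mem_of_mem_erase (hW₂B hbW₂)
                      have hbH' : b ∈ H' := hsubH' (mem_inter.mpr ⟨hb, hbB⟩)
                      exact (mem_sdiff.mp (hsubW₂ hbH')).2 hbW₂
                    · intro b hb
                      have hb2 := mem_sdiff.mp (hsubW₂ hb)
                      exact mem_sdiff.mpr ⟨mem_union_right _ hb2.1, hb2.2⟩
                  have heq := hF.2 _ hmem2 subset_union_left
                  refine subset_antisymm hsubH' ?_
                  intro b hb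
                  have hbF : b ∈ F := by rw [heq]; exact mem_union_right F hb
                  exact mem_inter.mpr ⟨hbF, mem_of_mem_erase (hH'B hb)⟩
                have hFBfacetB : IsFacet (KC B D) (F ∩ B) := by
                  apply hshedB
                  rw [delC_KC]
                  exact hFBfacet
                have hxFB : insert x (F ∩ B) ∈ KC B D := by
                  refine ⟨W, hWD, insert_subset (mem_sdiff.mpr ⟨hxB, hxW⟩) ?_⟩
                  intro b hb
                  obtain ⟨hbF, hbB⟩ := mem_inter.mp hb
                  exact mem_sdiff.mpr ⟨hbB, hFW b hbF⟩
                have heqx := hFBfacetB.2 _ hxFB (subset_insert _ _)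
                have hx2 : x ∈ F ∩ B := by rw [heqx]; exact mem_insert_self _ _
                exact hxF (mem_inter.mp hx2).1
            · refine vd_congr hlk.symm (IH s A (B.erase x) {W ∈ D | x ∉ W} ?_ hs ?_ ?_ ?_)
              · have hc : (A ∪ B.erase x).card = (A ∪ B).card - 1 := by
                  rw [← hg, card_erase_of_mem hxU]
                omega
              · exact hdisj.mono_right (erase_subset _ _)
              · rintro W ⟨hWD, hxW⟩
                exact ⟨subset_erase.mpr ⟨(hD W hWD).1, hxW⟩, (hD W hWD).2⟩
              · rw [show KC (B.erase x) {W ∈ D | x ∉ W} = linkC (KC B D) x from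
                  (linkC_KC hxB).symm]
                exact hvdlkB
            · refine vd_congr hdl.symm (IH (s-1) A (B.erase x) ((fun W => W.erase x) '' D)
                ?_ (by omega) ?_ ?_ ?_)
              · have hc : (A ∪ B.erase x).card = (A ∪ B).card - 1 := by
                  rw [← hg, card_erase_of_mem hxU]
                omega
              · exact hdisj.mono_right (erase_subset _ _)
              · rintro W ⟨W₀, hW₀, rfl⟩
                dsimp only
                refine ⟨erase_subset_erase _ (hD W₀ hW₀).1, ?_⟩
                have h2 := (hD W₀ hW₀).2
                by_cases hx0 : x ∈ W₀
                · rw [card_erase_of_mem hx0]; omega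
                · rw [erase_eq_of_notMem hx0]; omega
              · rw [← delC_KC]
                exact hvddelB

-- ==================== the main join lemma ====================

lemma vd_main : ∀ (n : ℕ) (r : ℕ) (A B : Finset V) (C₁ C₂ : Set (Finset V)),
    A.card ≤ n → 2 ≤ r → Disjoint A B →
    (∀ W ∈ C₁, W ⊆ A ∧ W.card = r) → (∀ W ∈ C₂, W ⊆ B ∧ W.card = r) →
    VD (KC A C₁) → VD (KC B C₂) →
    VD (KC (A ∪ B) (crB r A B ∪ C₁ ∪ C₂)) := by
  have hbaseA : ∀ (r : ℕ) (B : Finset V) (C₁ C₂ : Set (Finset V)), 2 ≤ r →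
      (∀ W ∈ C₁, W ⊆ (∅ : Finset V) ∧ W.card = r) → VD (KC B C₂) →
      VD (KC (∅ ∪ B) (crB r ∅ B ∪ C₁ ∪ C₂)) := by
    intro r B C₁ C₂ hr hC₁ hvdB
    have h1 : crB r (∅ : Finset V) B = ∅ := by
      ext W
      simp only [crB, Set.mem_setOf_eq, Set.mem_empty_iff_false, iff_false, not_and]
      intro _ _
      simp
    have h2 : C₁ = ∅ := by
      ext W
      simp only [Set.mem_empty_iff_false, iff_false]
      intro hW
      have := (hC₁ W hW).2
      rw [subset_empty.mp (hC₁ W hW).1, card_empty] at this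
      omega
    rw [h1, h2, Set.empty_union, Set.empty_union, empty_union]
    exact hvdB
  intro n
  induction n with
  | zero =>
    intro r A B C₁ C₂ hAn hr hdisj hC₁ hC₂ hvdA hvdB
    have hA : A = ∅ := card_eq_zero.mp (Nat.le_zero.mp hAn)
    subst hA
    exact hbaseA r B C₁ C₂ hr hC₁ hvdB
  | succ n IH =>
    intro r A B C₁ C₂ hAn hr hdisj hC₁ hC₂ hvdA hvdB
    by_cases hA : A = ∅
    · subst hA
      exact hbaseA r B C₁ C₂ hr hC₁ hvdB
    by_cases hB : B = ∅
    · subst hB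
      have h1 : crB r A ∅ = ∅ := by
        ext W
        simp only [crB, Set.mem_setOf_eq, Set.mem_empty_iff_false, iff_false, not_and]
        intro _ _
        simp
      have h2 : C₂ = ∅ := by
        ext W
        simp only [Set.mem_empty_iff_false, iff_false]
        intro hW
        have := (hC₂ W hW).2
        rw [subset_empty.mp (hC₂ W hW).1, card_empty] at this
        omega
      rw [h1, h2, Set.empty_union, Set.union_empty, union_empty]
      exact hvdA
    obtain ⟨a₀, ha₀⟩ := nonempty_iff_ne_empty.mpr hA
    obtain ⟨b₀, hb₀⟩ := nonempty_iff_ne_empty.mpr hB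
    have ha₀U : a₀ ∈ A ∪ B := mem_union_left _ ha₀
    have hb₀U : b₀ ∈ A ∪ B := mem_union_right _ hb₀
    rcases lt_trichotomy ((A ∪ B).card) r with hlt | heqc | hgt
    · -- void
      have : KC (A ∪ B) (crB r A B ∪ C₁ ∪ C₂) = ∅ := by
        ext H
        simp only [mem_KC, Set.mem_empty_iff_false, iff_false, not_exists]
        rintro W ⟨((⟨hWU, hWc, _⟩ | hWD) | hWD), _⟩
        · have := card_le_card hWU; omega
        · have h1 : W.card ≤ (A ∪ B).card :=
            card_le_card ((hC₁ W hWD).1.trans subset_union_left)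
          have h2 := (hC₁ W hWD).2
          omega
        · have h1 : W.card ≤ (A ∪ B).card :=
            card_le_card ((hC₂ W hWD).1.trans subset_union_right)
          have h2 := (hC₂ W hWD).2
          omega
      exact vd_congr this.symm VD.void
    · -- circuits = {A ∪ B}: simplex {∅}
      have hAU : A ⊂ A ∪ B :=
        (ssubset_iff_of_subset subset_union_left).mpr
          ⟨b₀, hb₀U, disjoint_right.mp hdisj hb₀⟩
      have hBU : B ⊂ A ∪ B :=
        (ssubset_iff_of_subset subset_union_right).mpr ⟨a₀, ha₀U, disjoint_left.mp hdisj ha₀⟩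
      have hC₁0 : C₁ = ∅ := by
        ext W
        simp only [Set.mem_empty_iff_false, iff_false]
        intro hW
        have h1 := card_le_card ((hC₁ W hW).1)
        have h2 := (hC₁ W hW).2
        have h3 := card_lt_card hAU
        omega
      have hC₂0 : C₂ = ∅ := by
        ext W
        simp only [Set.mem_empty_iff_false, iff_false]
        intro hW
        have h1 := card_le_card ((hC₂ W hW).1)
        have h2 := (hC₂ W hW).2
        have h3 := card_lt_card hBU
        omega
      have hcircs : crB r A B ∪ C₁ ∪ C₂ = {A ∪ B} := by
        rw [hC₁0, hC₂0, Set.union_empty, Set.union_empty]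
        ext W
        simp only [crB, Set.mem_setOf_eq, Set.mem_singleton_iff]
        constructor
        · rintro ⟨hWU, hWc, _, _⟩
          exact Finset.eq_of_subset_of_card_le hWU (by omega)
        · rintro rfl
          exact ⟨subset_rfl, heqc, ⟨a₀, mem_inter.mpr ⟨ha₀U, ha₀⟩⟩,
            ⟨b₀, mem_inter.mpr ⟨hb₀U, hb₀⟩⟩⟩
      rw [hcircs, KC_ground_self]
      exact VD.simplex ∅
    · -- main case
      obtain ⟨x, hxA, hshedA, hvdlkA, hvddelA⟩ :=
        pick_shedding (A := A) (D := C₁)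
          (fun W hW => ⟨(hC₁ W hW).1, card_pos.mp (by rw [(hC₁ W hW).2]; omega)⟩)
          (nonempty_iff_ne_empty.mpr hA) hvdA
      have hxB : x ∉ B := disjoint_left.mp hdisj hxA
      have hxU : x ∈ A ∪ B := mem_union_left _ hxA
      have hg : (A ∪ B).erase x = A.erase x ∪ B := by
        rw [erase_union_distrib, erase_eq_of_notMem hxB]
      have hgc : (A ∪ B).erase x = B ∪ A.erase x := by rw [hg, union_comm]
      have hgsub : B ∪ A.erase x ⊆ A ∪ B := by
        rw [← hgc]; exact erase_subset _ _
      have hxg : x ∉ B ∪ A.erase x := by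
        rw [← hgc]; exact notMem_erase _ _
      have hC₂x : ∀ W ∈ C₂, x ∉ W := fun W hW h => hxB ((hC₂ W hW).1 h)
      by_cases hspec : (A.erase x).Nonempty ∨ ∃ W, W ∈ C₂
      · -- VD.step at x
        -- link identity
        have hlkcirc : {W ∈ crB r A B ∪ C₁ ∪ C₂ | x ∉ W}
            = crB r (A.erase x) B ∪ {W ∈ C₁ | x ∉ W} ∪ C₂ := by
          ext W
          simp only [Set.mem_sep_iff, Set.mem_union, crB, Set.mem_setOf_eq]
          constructor
          · rintro ⟨(⟨hWU, hWc, ⟨wa, hwa⟩, hWB⟩ | hW1) | hW2, hxW⟩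
            · obtain ⟨hwaW, hwaA⟩ := mem_inter.mp hwa
              refine Or.inl (Or.inl ⟨?_, hWc, ⟨wa, mem_inter.mpr ⟨hwaW,
                mem_erase.mpr ⟨fun h => hxW (h ▸ hwaW), hwaA⟩⟩⟩, hWB⟩)
              rw [← hg]
              exact subset_erase.mpr ⟨hWU, hxW⟩
            · exact Or.inl (Or.inr ⟨hW1, hxW⟩)
            · exact Or.inr hW2
          · rintro ((⟨hWU, hWc, ⟨wa, hwa⟩, hWB⟩ | ⟨hW1, hxW⟩) | hW2)
            · have hxW : x ∉ W := by
                intro h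
                have h2 : x ∈ (A ∪ B).erase x := by rw [hg]; exact hWU h
                exact (mem_erase.mp h2).1 rfl
              obtain ⟨hwaW, hwaA⟩ := mem_inter.mp hwa
              exact ⟨Or.inl (Or.inl ⟨hWU.trans (by rw [← hg]; exact erase_subset _ _), hWc,
                ⟨wa, mem_inter.mpr ⟨hwaW, mem_of_mem_erase hwaA⟩⟩, hWB⟩), hxW⟩
            · exact ⟨Or.inl (Or.inr hW1), hxW⟩
            · exact ⟨Or.inr hW2, hC₂x W hW2⟩
        have hlk : linkC (KC (A ∪ B) (crB r A B ∪ C₁ ∪ C₂)) x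
            = KC (A.erase x ∪ B) (crB r (A.erase x) B ∪ {W ∈ C₁ | x ∉ W} ∪ C₂) := by
          rw [linkC_KC hxU, hlkcirc, hg]
        -- deletion identity
        have hdl : delC (KC (A ∪ B) (crB r A B ∪ C₁ ∪ C₂)) x
            = KC (B ∪ A.erase x)
                (crA (r-1) B (B ∪ A.erase x) ∪ ((fun W => W.erase x) '' C₁)) := by
          rw [delC_KC, hgc]
          apply KC_eq_KC
          · rintro W' ⟨W, hW, rfl⟩
            rcases hW with (⟨hWU, hWc, hWA, ⟨wb, hwb⟩⟩ | hW1) | hW2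
            · obtain ⟨hwbW, hwbB⟩ := mem_inter.mp hwb
              by_cases hxW : x ∈ W
              · have hm : W.erase x ∈ crA (r-1) B (B ∪ A.erase x) := by
                  refine ⟨by rw [← hgc]; exact erase_subset_erase _ hWU,
                    by rw [card_erase_of_mem hxW, hWc], ⟨wb, mem_inter.mpr
                      ⟨mem_erase.mpr ⟨fun h => hxB (h ▸ hwbB), hwbW⟩, hwbB⟩⟩⟩
                exact ⟨W.erase x, Or.inl hm, subset_rfl⟩
              · obtain ⟨y, hyW, hyne⟩ :=
                  Finset.exists_mem_ne (show 1 < W.card by omega) wb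
                have hsub1 : W.erase y ⊆ B ∪ A.erase x := by
                  rw [← hgc]
                  exact (erase_subset _ _).trans (subset_erase.mpr ⟨hWU, hxW⟩)
                have hm : W.erase y ∈ crA (r-1) B (B ∪ A.erase x) :=
                  ⟨hsub1, by rw [card_erase_of_mem hyW, hWc],
                    ⟨wb, mem_inter.mpr ⟨mem_erase.mpr ⟨hyne.symm, hwbW⟩, hwbB⟩⟩⟩
                refine ⟨W.erase y, Or.inl hm, ?_⟩
                dsimp only
                rw [erase_eq_of_notMem hxW]
                exact erase_subset _ _
            · exact ⟨W.erase x, Or.inr ⟨W, hW1, rfl⟩, subset_rfl⟩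
            · have hWB := (hC₂ W hW2).1
              have hWc := (hC₂ W hW2).2
              have hxW : x ∉ W := hC₂x W hW2
              obtain ⟨wb, hwbW⟩ := card_pos.mp (show 0 < W.card by omega)
              obtain ⟨y, hyW, hyne⟩ :=
                Finset.exists_mem_ne (show 1 < W.card by omega) wb
              have hm : W.erase y ∈ crA (r-1) B (B ∪ A.erase x) := by
                refine ⟨(erase_subset _ _).trans (hWB.trans subset_union_left),
                  by rw [card_erase_of_mem hyW, hWc], ⟨wb, mem_inter.mpr
                    ⟨mem_erase.mpr ⟨hyne.symm, hwbW⟩, hWB hwbW⟩⟩⟩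
              refine ⟨W.erase y, Or.inl hm, ?_⟩
              dsimp only
              rw [erase_eq_of_notMem hxW]
              exact erase_subset _ _
          · rintro W hW
            rcases hW with ⟨hWg, hWc, hWB⟩ | himg
            · have hxW : x ∉ W := fun h => hxg (hWg h)
              have hm : insert x W ∈ crB r A B ∪ C₁ ∪ C₂ := by
                refine Or.inl (Or.inl ⟨insert_subset hxU (hWg.trans hgsub),
                  by rw [card_insert_of_notMem hxW]; omega,
                  ⟨x, mem_inter.mpr ⟨mem_insert_self _ _, hxA⟩⟩, ?_⟩)
                obtain ⟨wb, hwb⟩ := hWB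
                exact ⟨wb, mem_inter.mpr ⟨mem_insert_of_mem (mem_inter.mp hwb).1,
                  (mem_inter.mp hwb).2⟩⟩
              refine ⟨(insert x W).erase x, ⟨insert x W, hm, rfl⟩, ?_⟩
              rw [erase_insert hxW]
            · obtain ⟨W₀, hW₀, rfl⟩ := himg
              exact ⟨W₀.erase x, ⟨W₀, Or.inl (Or.inr hW₀), rfl⟩, subset_rfl⟩
        have hxK : ({x} : Finset V) ∈ KC (A ∪ B) (crB r A B ∪ C₁ ∪ C₂) := by
          rcases hspec with ⟨a', ha'⟩ | ⟨W, hW⟩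
          · have ha'A : a' ∈ A := mem_of_mem_erase ha'
            have ha'x : a' ≠ x := (mem_erase.mp ha').1
            have hab : a' ≠ b₀ := fun h => (disjoint_left.mp hdisj ha'A) (h ▸ hb₀)
            have hpair : ({a', b₀} : Finset V) ⊆ (A ∪ B).erase x := by
              intro c hc
              rcases mem_insert.mp hc with rfl | hc
              · exact mem_erase.mpr ⟨ha'x, mem_union_left _ ha'A⟩
              · rw [mem_singleton] at hc
                subst hc
                exact mem_erase.mpr ⟨fun h => hxB (h ▸ hb₀), hb₀U⟩
            obtain ⟨W, hWsup, hWsub, hWcard⟩ := Finset.exists_subsuperset_card_eq (n := r) hpair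
              (by rw [card_insert_of_notMem (by simpa using hab), card_singleton]; omega)
              (by rw [card_erase_of_mem hxU]; omega)
            refine mem_KC_of (W := W) (Or.inl (Or.inl ⟨hWsub.trans (erase_subset _ _), hWcard,
              ⟨a', mem_inter.mpr ⟨hWsup (mem_insert_self _ _), ha'A⟩⟩,
              ⟨b₀, mem_inter.mpr ⟨hWsup (by simp), hb₀⟩⟩⟩))
              (singleton_subset_iff.mpr hxU) ?_
            intro c hc hcW
            rw [mem_singleton] at hc
            exact (mem_erase.mp (hWsub hcW)).1 hc
          · refine mem_KC_of (Or.inr hW) (singleton_subset_iff.mpr hxU) ?_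
            intro c hc
            rw [mem_singleton] at hc
            subst hc
            exact hC₂x W hW
        refine VD.step _ x hxK ?_ ?_ ?_
        · -- shedding
          apply isShedding_of (dcl_KC _ _)
          intro F hF hins
          rw [hdl] at hF
          have hFg : F ⊆ B ∪ A.erase x := subset_of_mem_KC hF.1
          have hxF : x ∉ F := fun h => hxg (hFg h)
          obtain ⟨W, hWmem, hsub⟩ := hins
          have hxW : x ∉ W := (mem_sdiff.mp (hsub (mem_insert_self _ _))).2
          have hFW : ∀ b ∈ F, b ∉ W := fun b hb =>
            (mem_sdiff.mp (hsub (mem_insert_of_mem hb))).2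
          have keycase : ∀ (hWU : W ⊆ A ∪ B) (hWc : W.card = r) (wb : V),
              wb ∈ W ∩ B → False := by
            intro hWU hWc wb hwb
            obtain ⟨hwbW, hwbB⟩ := mem_inter.mp hwb
            obtain ⟨y, hyW, hyne⟩ :=
              Finset.exists_mem_ne (show 1 < W.card by omega) wb
            have hsub1 : W.erase y ⊆ B ∪ A.erase x := by
              rw [← hgc]
              exact (erase_subset _ _).trans (subset_erase.mpr ⟨hWU, hxW⟩)
            have hm : W.erase y ∈ crA (r-1) B (B ∪ A.erase x) :=
              ⟨hsub1, by rw [card_erase_of_mem hyW, hWc],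
                ⟨wb, mem_inter.mpr ⟨mem_erase.mpr ⟨hyne.symm, hwbW⟩, hwbB⟩⟩⟩
            have hymem : insert y F ∈ KC (B ∪ A.erase x)
                (crA (r-1) B (B ∪ A.erase x) ∪ ((fun W => W.erase x) '' C₁)) := by
              refine ⟨W.erase y, Or.inl hm, insert_subset ?_ ?_⟩
              · refine mem_sdiff.mpr ⟨?_, notMem_erase _ _⟩
                rw [← hgc]
                exact mem_erase.mpr ⟨fun h => hxW (h ▸ hyW), hWU hyW⟩
              · intro b hb
                exact mem_sdiff.mpr ⟨hFg hb, fun h => hFW b hb (mem_of_mem_erase h)⟩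
            have heqy := hF.2 _ hymem (subset_insert _ _)
            exact hFW y (heqy ▸ mem_insert_self y F) hyW
          rcases hWmem with (⟨hWU, hWc, hWA, ⟨wb, hwb⟩⟩ | hW1) | hW2
          · exact keycase hWU hWc wb hwb
          · -- the Σ_A argument
            have hWA : W ⊆ A := (hC₁ W hW1).1
            have hWimg : W ∈ ((fun W => W.erase x) '' C₁) :=
              ⟨W, hW1, erase_eq_of_notMem hxW⟩
            have hFAmem : F ∩ A ∈ KC (A.erase x) ((fun W => W.erase x) '' C₁) := by
              refine ⟨W, hWimg, ?_⟩
              intro b hb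
              obtain ⟨hbF, hbA⟩ := mem_inter.mp hb
              exact mem_sdiff.mpr ⟨mem_erase.mpr ⟨fun h => hxF (h ▸ hbF), hbA⟩, hFW b hbF⟩
            have hFAfacet : IsFacet (KC (A.erase x) ((fun W => W.erase x) '' C₁)) (F ∩ A) := by
              refine ⟨hFAmem, ?_⟩
              intro H' hH' hsubH'
              have hH'A : H' ⊆ A.erase x := subset_of_mem_KC hH'
              obtain ⟨W₂, hW₂img, hsubW₂⟩ := hH'
              have hW₂A : W₂ ⊆ A.erase x := by
                obtain ⟨W₀, hW₀, rfl⟩ := hW₂img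
                exact erase_subset_erase _ (hC₁ W₀ hW₀).1
              have hmem2 : F ∪ H' ∈ KC (B ∪ A.erase x)
                  (crA (r-1) B (B ∪ A.erase x) ∪ ((fun W => W.erase x) '' C₁)) := by
                refine ⟨W₂, Or.inr hW₂img, union_subset ?_ ?_⟩
                · intro b hb
                  refine mem_sdiff.mpr ⟨hFg hb, fun hbW₂ => ?_⟩
                  have hbA : b ∈ A := mem_of_mem_erase (hW₂A hbW₂)
                  have hbH' : b ∈ H' := hsubH' (mem_inter.mpr ⟨hb, hbA⟩)
                  exact (mem_sdiff.mp (hsubW₂ hbH')).2 hbW₂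
                · intro b hb
                  have hb2 := mem_sdiff.mp (hsubW₂ hb)
                  exact mem_sdiff.mpr ⟨mem_union_right _ hb2.1, hb2.2⟩
              have heq := hF.2 _ hmem2 subset_union_left
              refine subset_antisymm hsubH' ?_
              intro b hb
              have hbF : b ∈ F := by rw [heq]; exact mem_union_right F hb
              exact mem_inter.mpr ⟨hbF, mem_of_mem_erase (hH'A hb)⟩
            have hFAfacetA : IsFacet (KC A C₁) (F ∩ A) := by
              apply hshedA
              rw [delC_KC]
              exact hFAfacet
            have hxFA : insert x (F ∩ A) ∈ KC A C₁ := by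
              refine ⟨W, hW1, insert_subset (mem_sdiff.mpr ⟨hxA, hxW⟩) ?_⟩
              intro b hb
              obtain ⟨hbF, hbA⟩ := mem_inter.mp hb
              exact mem_sdiff.mpr ⟨hbA, hFW b hbF⟩
            have heqx := hFAfacetA.2 _ hxFA (subset_insert _ _)
            have hx2 : x ∈ F ∩ A := by rw [heqx]; exact mem_insert_self _ _
            exact hxF (mem_inter.mp hx2).1
          · have hWB := (hC₂ W hW2).1
            obtain ⟨wb, hwbW⟩ := card_pos.mp (show 0 < W.card by rw [(hC₂ W hW2).2]; omega)
            exact keycase (hWB.trans subset_union_right) (hC₂ W hW2).2 wb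
              (mem_inter.mpr ⟨hwbW, hWB hwbW⟩)
        · -- link
          refine vd_congr hlk.symm (IH r (A.erase x) B {W ∈ C₁ | x ∉ W} C₂ ?_ hr
            (hdisj.mono_left (erase_subset _ _)) ?_ hC₂ ?_ hvdB)
          · rw [card_erase_of_mem hxA]; omega
          · rintro W ⟨hW1, hxW⟩
            exact ⟨subset_erase.mpr ⟨(hC₁ W hW1).1, hxW⟩, (hC₁ W hW1).2⟩
          · rw [show KC (A.erase x) {W ∈ C₁ | x ∉ W} = linkC (KC A C₁) x from
              (linkC_KC hxA).symm]
            exact hvdlkA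
        · -- deletion: apply the Φ-lemma
          refine vd_congr hdl.symm (vd_phi ((B ∪ A.erase x).card) (r-1) B (A.erase x)
            ((fun W => W.erase x) '' C₁) le_rfl (by omega)
            (hdisj.mono_left (erase_subset _ _)).symm ?_ ?_)
          · rintro W ⟨W₀, hW₀, rfl⟩
            dsimp only
            refine ⟨erase_subset_erase _ (hC₁ W₀ hW₀).1, ?_⟩
            have h2 := (hC₁ W₀ hW₀).2
            by_cases hx0 : x ∈ W₀
            · rw [card_erase_of_mem hx0]; omega
            · rw [erase_eq_of_notMem hx0]; omega
          · rw [← delC_KC]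
            exact hvddelA
      · -- degenerate: A = {x}, C₂ = ∅ (and hence C₁ = ∅): a skeleton
        push_neg at hspec
        obtain ⟨hAx, hC₂0⟩ := hspec
        have hAeq : A = {x} := by
          rcases (erase_eq_empty_iff A x).mp hAx with h | h
          · exact absurd h hA
          · exact h
        have hC₁0 : C₁ = ∅ := by
          ext W
          simp only [Set.mem_empty_iff_false, iff_false]
          intro hW
          have h1 := card_le_card ((hC₁ W hW).1)
          have h2 := (hC₁ W hW).2
          rw [hAeq, card_singleton] at h1
          omega
        have hC₂0' : C₂ = ∅ := by
          ext W
          simp only [Set.mem_empty_iff_false, iff_false]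
          exact fun hW => hC₂0 W hW
        have hKeq : KC (A ∪ B) (crB r A B ∪ C₁ ∪ C₂) = KC B (allC (r-1) B) := by
          rw [hC₁0, hC₂0', Set.union_empty, Set.union_empty]
          ext H
          constructor
          · rintro ⟨W, ⟨hWU, hWc, ⟨wa, hwa⟩, _⟩, hsub⟩
            obtain ⟨hwaW, hwaA⟩ := mem_inter.mp hwa
            have hwax : wa = x := by rw [hAeq, mem_singleton] at hwaA; exact hwaA
            subst hwax
            have hHB : H ⊆ B := by
              intro b hb
              have hbs := mem_sdiff.mp (hsub hb)
              rcases mem_union.mp hbs.1 with hbA | hbB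
              · rw [hAeq, mem_singleton] at hbA
                exact absurd (hbA ▸ hwaW) hbs.2
              · exact hbB
            refine ⟨W.erase wa, ⟨?_, by rw [card_erase_of_mem hwaW, hWc]⟩, ?_⟩
            · intro c hc
              obtain ⟨hcx, hcW⟩ := mem_erase.mp hc
              rcases mem_union.mp (hWU hcW) with hcA | hcB
              · rw [hAeq, mem_singleton] at hcA
                exact absurd hcA hcx
              · exact hcB
            · intro b hb
              exact mem_sdiff.mpr ⟨hHB hb, fun h =>
                (mem_sdiff.mp (hsub hb)).2 (mem_of_mem_erase h)⟩
          · rintro ⟨W', ⟨hW'B, hW'c⟩, hsub⟩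
            have hxW' : x ∉ W' := fun h => (disjoint_left.mp hdisj (hAeq ▸ mem_singleton_self x)) (hW'B h)
            have hHB : H ⊆ B := hsub.trans sdiff_subset
            refine ⟨insert x W', ⟨insert_subset hxU (hW'B.trans subset_union_right),
              by rw [card_insert_of_notMem hxW']; omega,
              ⟨x, mem_inter.mpr ⟨mem_insert_self _ _, hxA⟩⟩, ?_⟩, ?_⟩
            · obtain ⟨w', hw'⟩ := card_pos.mp (show 0 < W'.card by omega)
              exact ⟨w', mem_inter.mpr ⟨mem_insert_of_mem hw', hW'B hw'⟩⟩
            · intro b hb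
              have hbB := hHB hb
              refine mem_sdiff.mpr ⟨mem_union_right _ hbB, ?_⟩
              intro hbW
              rcases mem_insert.mp hbW with rfl | hbW'
              · exact hxB hbB
              · exact (mem_sdiff.mp (hsub hb)).2 hbW'
        rw [hKeq]
        exact vd_skel B.card B (r-1) le_rfl

-- ==================== iterated links ====================

lemma vd_iter (U : Finset V) (D : Set (Finset V)) :
    ∀ S : Finset V, S ⊆ U → VD (KC U D) → VD (KC (U \ S) {W ∈ D | ∀ a ∈ S, a ∉ W}) := by
  intro S
  induction S using Finset.induction_on with
  | empty =>
    intro _ hvd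
    have h1 : U \ ∅ = U := sdiff_empty
    have h2 : {W ∈ D | ∀ a ∈ (∅ : Finset V), a ∉ W} = D := by
      ext W; simp
    rw [h1, h2]
    exact hvd
  | @insert x S hxS IH =>
    intro hins hvd
    have hSU : S ⊆ U := (subset_insert x S).trans hins
    have h1 := IH hSU hvd
    have hxUS : x ∈ U \ S := mem_sdiff.mpr ⟨hins (mem_insert_self _ _), hxS⟩
    have h2 := vd_linkC h1 (dcl_KC _ _) x
    rw [linkC_KC hxUS] at h2
    have hg : (U \ S).erase x = U \ insert x S := by
      ext c
      simp only [mem_erase, mem_sdiff, mem_insert]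
      tauto
    have hcirc : {W ∈ {W ∈ D | ∀ a ∈ S, a ∉ W} | x ∉ W}
        = {W ∈ D | ∀ a ∈ insert x S, a ∉ W} := by
      ext W
      simp only [Set.mem_sep_iff, mem_insert]
      constructor
      · rintro ⟨⟨hD, hS⟩, hx⟩
        exact ⟨hD, fun a ha => ha.elim (fun h => h ▸ hx) (hS a)⟩
      · rintro ⟨hD, hall⟩
        exact ⟨⟨hD, fun a ha => hall a (Or.inr ha)⟩, hall x (Or.inl rfl)⟩
    rw [hg, hcirc] at h2
    exact h2

-- ==================== graph lemmas ====================

lemma join_adj_of_cross {G₁ G₂ : SimpleGraph V} {U₁ U₂ : Finset V} (hU : Disjoint U₁ U₂)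
    {a b : V} (ha : a ∈ U₁) (hb : b ∈ U₂) : (joinGraph G₁ G₂ U₁ U₂).Adj a b := by
  rw [joinGraph, SimpleGraph.fromRel_adj]
  exact ⟨fun h => disjoint_left.mp hU ha (by rw [h]; exact hb),
    Or.inl (Or.inr (Or.inr ⟨ha, hb⟩))⟩

lemma join_adj_iff_left {G₁ G₂ : SimpleGraph V} {U₁ U₂ : Finset V} (hU : Disjoint U₁ U₂)
    (h₂ : ∀ a b : V, G₂.Adj a b → a ∈ U₂ ∧ b ∈ U₂)
    {a b : V} (ha : a ∈ U₁) (hb : b ∈ U₁) :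
    (joinGraph G₁ G₂ U₁ U₂).Adj a b ↔ G₁.Adj a b := by
  rw [joinGraph, SimpleGraph.fromRel_adj]
  constructor
  · rintro ⟨hne, (h | h | h) | (h | h | h)⟩
    · exact h
    · exact absurd (h₂ _ _ h).1 (disjoint_left.mp hU ha)
    · exact absurd h.2 (disjoint_left.mp hU hb)
    · exact h.symm
    · exact absurd (h₂ _ _ h).2 (disjoint_left.mp hU ha)
    · exact absurd h.2 (disjoint_left.mp hU ha)
  · intro h
    exact ⟨h.ne, Or.inl (Or.inl h)⟩

lemma join_adj_iff_right {G₁ G₂ : SimpleGraph V} {U₁ U₂ : Finset V} (hU : Disjoint U₁ U₂)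
    (h₁ : ∀ a b : V, G₁.Adj a b → a ∈ U₁ ∧ b ∈ U₁)
    {a b : V} (ha : a ∈ U₂) (hb : b ∈ U₂) :
    (joinGraph G₁ G₂ U₁ U₂).Adj a b ↔ G₂.Adj a b := by
  rw [joinGraph, SimpleGraph.fromRel_adj]
  constructor
  · rintro ⟨hne, (h | h | h) | (h | h | h)⟩
    · exact absurd (h₁ _ _ h).1 (disjoint_right.mp hU ha)
    · exact h
    · exact absurd h.1 (disjoint_right.mp hU ha)
    · exact absurd (h₁ _ _ h).2 (disjoint_right.mp hU ha)
    · exact h.symm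
    · exact absurd h.1 (disjoint_right.mp hU hb)
  · intro h
    exact ⟨h.ne, Or.inl (Or.inr (Or.inl h))⟩

lemma connOn_congr {G G' : SimpleGraph V} {s : Finset V}
    (h : ∀ a ∈ s, ∀ b ∈ s, (G.Adj a b ↔ G'.Adj a b)) : ConnOn G s ↔ ConnOn G' s := by
  have heq : G.induce (s : Set V) = G'.induce (s : Set V) := by
    ext ⟨a, ha⟩ ⟨b, hb⟩
    show G.Adj a b ↔ G'.Adj a b
    exact h a (by simpa using ha) b (by simpa using hb)
  unfold ConnOn
  rw [heq]

lemma connOn_cross {G₁ G₂ : SimpleGraph V} {U₁ U₂ : Finset V} (hU : Disjoint U₁ U₂)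
    {W : Finset V} (hW : W ⊆ U₁ ∪ U₂) (h1 : (W ∩ U₁).Nonempty) (h2 : (W ∩ U₂).Nonempty) :
    ConnOn (joinGraph G₁ G₂ U₁ U₂) W := by
  obtain ⟨a, ha⟩ := h1
  obtain ⟨b, hb⟩ := h2
  obtain ⟨haW, haU⟩ := mem_inter.mp ha
  obtain ⟨hbW, hbU⟩ := mem_inter.mp hb
  have haW' : a ∈ (W : Set V) := by simpa using haW
  have hbW' : b ∈ (W : Set V) := by simpa using hbW
  have key : ∀ u : ((W : Set V)),
      ((joinGraph G₁ G₂ U₁ U₂).induce (W : Set V)).Reachable u ⟨a, haW'⟩ := by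
    rintro ⟨u, hu⟩
    have huW : u ∈ W := by simpa using hu
    rcases mem_union.mp (hW huW) with hu1 | hu2
    · by_cases hua : u = a
      · subst hua
        exact SimpleGraph.Reachable.refl _
      · have hadj1 : ((joinGraph G₁ G₂ U₁ U₂).induce (W : Set V)).Adj ⟨u, hu⟩ ⟨b, hbW'⟩ :=
          join_adj_of_cross hU hu1 hbU
        have hadj2 : ((joinGraph G₁ G₂ U₁ U₂).induce (W : Set V)).Adj ⟨a, haW'⟩ ⟨b, hbW'⟩ :=
          join_adj_of_cross hU haU hbU
        exact hadj1.reachable.trans hadj2.reachable.symm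
    · have hadj1 : ((joinGraph G₁ G₂ U₁ U₂).induce (W : Set V)).Adj ⟨a, haW'⟩ ⟨u, hu⟩ :=
        join_adj_of_cross hU haU hu2
      exact hadj1.reachable.symm
  unfold ConnOn
  exact (SimpleGraph.connected_iff _).mpr
    ⟨fun u v => (key u).trans (key v).symm, ⟨⟨a, haW'⟩⟩⟩

lemma conR_join {G₁ G₂ : SimpleGraph V} {U₁ U₂ : Finset V} (hU : Disjoint U₁ U₂)
    (h₁ : ∀ a b : V, G₁.Adj a b → a ∈ U₁ ∧ b ∈ U₁)
    (h₂ : ∀ a b : V, G₂.Adj a b → a ∈ U₂ ∧ b ∈ U₂) (r : ℕ) (hr : 1 ≤ r) :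
    ConR (joinGraph G₁ G₂ U₁ U₂) (U₁ ∪ U₂) r
      = crB r U₁ U₂ ∪ ConR G₁ U₁ r ∪ ConR G₂ U₂ r := by
  ext W
  constructor
  · rintro ⟨hWU, hWc, hconn⟩
    by_cases hW1 : (W ∩ U₁).Nonempty
    · by_cases hW2 : (W ∩ U₂).Nonempty
      · exact Or.inl (Or.inl ⟨hWU, hWc, hW1, hW2⟩)
      · have hWsub : W ⊆ U₁ := by
          intro w hw
          rcases mem_union.mp (hWU hw) with h | h
          · exact h
          · exact absurd ⟨w, mem_inter.mpr ⟨hw, h⟩⟩ hW2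
        refine Or.inl (Or.inr ⟨hWsub, hWc, ?_⟩)
        exact (connOn_congr
          (fun x hx y hy => join_adj_iff_left hU h₂ (hWsub hx) (hWsub hy))).mp hconn
    · have hWsub : W ⊆ U₂ := by
        intro w hw
        rcases mem_union.mp (hWU hw) with h | h
        · exact absurd ⟨w, mem_inter.mpr ⟨hw, h⟩⟩ hW1
        · exact h
      refine Or.inr ⟨hWsub, hWc, ?_⟩
      exact (connOn_congr
        (fun x hx y hy => join_adj_iff_right hU h₁ (hWsub hx) (hWsub hy))).mp hconn
  · rintro ((⟨hWU, hWc, hW1, hW2⟩ | ⟨hWs, hWc, hconn⟩) | ⟨hWs, hWc, hconn⟩)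
    · exact ⟨hWU, hWc, connOn_cross hU hWU hW1 hW2⟩
    · refine ⟨hWs.trans subset_union_left, hWc, ?_⟩
      exact (connOn_congr
        (fun x hx y hy => join_adj_iff_left hU h₂ (hWs hx) (hWs hy))).mpr hconn
    · refine ⟨hWs.trans subset_union_right, hWc, ?_⟩
      exact (connOn_congr
        (fun x hx y hy => join_adj_iff_right hU h₁ (hWs hx) (hWs hy))).mpr hconn

-- ==================== the theorem ====================

theorem sigma_joinGraph_vd_iff' (G₁ G₂ : SimpleGraph V) (U₁ U₂ : Finset V) (hU : Disjoint U₁ U₂)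
    (h₁ : ∀ a b : V, G₁.Adj a b → a ∈ U₁ ∧ b ∈ U₁)
    (h₂ : ∀ a b : V, G₂.Adj a b → a ∈ U₂ ∧ b ∈ U₂)
    (r : ℕ) (hr : 2 ≤ r) :
    VD (SigmaG (joinGraph G₁ G₂ U₁ U₂) (U₁ ∪ U₂) r) ↔
      VD (SigmaG G₁ U₁ r) ∧ VD (SigmaG G₂ U₂ r) := by
  have hKC : ∀ (G : SimpleGraph V) (U : Finset V), SigmaG G U r = KC U (ConR G U r) :=
    fun _ _ => rfl
  have hkey := conR_join hU h₁ h₂ r (by omega)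
  constructor
  · intro h
    rw [hKC] at h
    constructor
    · have h1 := vd_iter (U₁ ∪ U₂) (ConR (joinGraph G₁ G₂ U₁ U₂) (U₁ ∪ U₂) r) U₂
        subset_union_right h
      have hground : (U₁ ∪ U₂) \ U₂ = U₁ := by
        ext c
        simp only [mem_sdiff, mem_union]
        constructor
        · rintro ⟨h' | h', hc⟩
          exacts [h', absurd h' hc]
        · intro hc
          exact ⟨Or.inl hc, disjoint_left.mp hU hc⟩
      have hfilter : {W ∈ ConR (joinGraph G₁ G₂ U₁ U₂) (U₁ ∪ U₂) r | ∀ a ∈ U₂, a ∉ W}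
          = ConR G₁ U₁ r := by
        rw [hkey]
        ext W
        simp only [Set.mem_sep_iff, Set.mem_union]
        constructor
        · rintro ⟨((⟨_, _, _, ⟨b, hb⟩⟩ | hW1) | hW2), hall⟩
          · obtain ⟨hbW, hbU⟩ := mem_inter.mp hb
            exact absurd hbW (hall b hbU)
          · exact hW1
          · obtain ⟨w, hw⟩ := card_pos.mp (show 0 < W.card by rw [hW2.2.1]; omega)
            exact absurd hw (hall w (hW2.1 hw))
        · intro hW1
          refine ⟨Or.inl (Or.inr hW1), fun a ha haW => ?_⟩
          exact disjoint_left.mp hU (hW1.1 haW) ha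
      rw [hground, hfilter] at h1
      rw [hKC]
      exact h1
    · have h1 := vd_iter (U₁ ∪ U₂) (ConR (joinGraph G₁ G₂ U₁ U₂) (U₁ ∪ U₂) r) U₁
        subset_union_left h
      have hground : (U₁ ∪ U₂) \ U₁ = U₂ := by
        ext c
        simp only [mem_sdiff, mem_union]
        constructor
        · rintro ⟨h' | h', hc⟩
          exacts [absurd h' hc, h']
        · intro hc
          exact ⟨Or.inr hc, disjoint_right.mp hU hc⟩
      have hfilter : {W ∈ ConR (joinGraph G₁ G₂ U₁ U₂) (U₁ ∪ U₂) r | ∀ a ∈ U₁, a ∉ W}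
          = ConR G₂ U₂ r := by
        rw [hkey]
        ext W
        simp only [Set.mem_sep_iff, Set.mem_union]
        constructor
        · rintro ⟨((⟨_, _, ⟨b, hb⟩, _⟩ | hW1) | hW2), hall⟩
          · obtain ⟨hbW, hbU⟩ := mem_inter.mp hb
            exact absurd hbW (hall b hbU)
          · obtain ⟨w, hw⟩ := card_pos.mp (show 0 < W.card by rw [hW1.2.1]; omega)
            exact absurd hw (hall w (hW1.1 hw))
          · exact hW2
        · intro hW2
          refine ⟨Or.inr hW2, fun a ha haW => ?_⟩
          exact disjoint_right.mp hU (hW2.1 haW) ha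
      rw [hground, hfilter] at h1
      rw [hKC]
      exact h1
  · rintro ⟨hv1, hv2⟩
    rw [hKC] at hv1 hv2 ⊢
    rw [hkey]
    exact vd_main U₁.card r U₁ U₂ (ConR G₁ U₁ r) (ConR G₂ U₂ r) le_rfl hr hU
      (fun W hW => ⟨hW.1, hW.2.1⟩) (fun W hW => ⟨hW.1, hW.2.1⟩) hv1 hv2

end AuxDev

/-- For `r ≥ 2` and graphs `G₁, G₂` on disjoint vertex sets `U₁, U₂`,
`Σ_r(G₁ * G₂)` is vertex decomposable iff both `Σ_r(G₁)` and `Σ_r(G₂)` are. -/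
theorem sigma_joinGraph_vd_iff {V : Type*} [Fintype V] [DecidableEq V]
    (G₁ G₂ : SimpleGraph V) (U₁ U₂ : Finset V) (hU : Disjoint U₁ U₂)
    (h₁ : ∀ a b : V, G₁.Adj a b → a ∈ U₁ ∧ b ∈ U₁)
    (h₂ : ∀ a b : V, G₂.Adj a b → a ∈ U₂ ∧ b ∈ U₂)
    (r : ℕ) (hr : 2 ≤ r) :
    VD (SigmaG (joinGraph G₁ G₂ U₁ U₂) (U₁ ∪ U₂) r) ↔
      VD (SigmaG G₁ U₁ r) ∧ VD (SigmaG G₂ U₂ r) := by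
  exact sigma_joinGraph_vd_iff' G₁ G₂ U₁ U₂ hU h₁ h₂ r hr
end

section
/- Let r ≥ 2 be an integer and let G be a finite simple chordal graph that is r-gap-free. Then the simplicial complex Σ_r(G) is vertex decomposable. -/
set_option linter.unusedSectionVars false
set_option linter.unusedVariables false
set_option maxHeartbeats 1000000


open Finset

variable {V : Type*} [Fintype V] [DecidableEq V]

/-- `G` has an induced cycle on `n` vertices. -/
def HasInducedCycle {V : Type*} (G : SimpleGraph V) (n : ℕ) : Prop :=
  ∃ f : Fin n → V, Function.Injective f ∧
    ∀ i j : Fin n, G.Adj (f i) (f j) ↔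
      (((i : ℕ) + 1) % n = (j : ℕ) ∨ ((j : ℕ) + 1) % n = (i : ℕ))

/-- A graph is chordal if it has no induced cycle of length at least `4`. -/
def Chordal {V : Type*} (G : SimpleGraph V) : Prop :=
  ∀ n : ℕ, 4 ≤ n → ¬ HasInducedCycle G n

/-- `G` is `r`-gap-free: no two disjoint circuits `E₁, E₂` of `Con_r(G)` such that `E₁, E₂`
are the only circuits of `Con_r(G)` contained in `E₁ ∪ E₂`. -/
def RGapFree {V : Type*} [Fintype V] [DecidableEq V] (G : SimpleGraph V) (r : ℕ) : Prop :=
  ¬ ∃ E₁ E₂ : Finset V, E₁ ∈ ConR G Finset.univ r ∧ E₂ ∈ ConR G Finset.univ r ∧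
      Disjoint E₁ E₂ ∧
      ∀ W ∈ ConR G Finset.univ r, W ⊆ E₁ ∪ E₂ → W = E₁ ∨ W = E₂

namespace VDP
open Relation


def stp (G : SimpleGraph V) (s : Finset V) (u v : V) : Prop := u ∈ s ∧ v ∈ s ∧ G.Adj u v

def Reach (G : SimpleGraph V) (s : Finset V) (u v : V) : Prop :=
  Relation.ReflTransGen (stp G s) u v

def conn (G : SimpleGraph V) (s : Finset V) : Prop :=
  s.Nonempty ∧ ∀ ⦃a⦄, a ∈ s → ∀ ⦃b⦄, b ∈ s → Reach G s a b

lemma stp_symm {G : SimpleGraph V} {s : Finset V} : Symmetric (stp G s) :=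
  fun _ _ h => ⟨h.2.1, h.1, h.2.2.symm⟩

lemma Reach.symm {G : SimpleGraph V} {s : Finset V} {u v : V} (h : Reach G s u v) :
    Reach G s v u := by
  unfold Reach at h ⊢
  induction h with
  | refl => exact Relation.ReflTransGen.refl
  | tail _ hbc ih => exact Relation.ReflTransGen.head (stp_symm hbc) ih

lemma Reach.mono {G : SimpleGraph V} {s t : Finset V} (hst : s ⊆ t) {u v : V}
    (h : Reach G s u v) : Reach G t u v :=
  Relation.ReflTransGen.mono (r := stp G s) (p := stp G t)
    (fun _ _ hx => ⟨hst hx.1, hst hx.2.1, hx.2.2⟩) u v h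

lemma conn_singleton (G : SimpleGraph V) (x : V) : conn G {x} := by
  refine ⟨⟨x, mem_singleton_self x⟩, ?_⟩
  intro a ha b hb
  rw [mem_singleton] at ha hb; subst ha; subst hb; exact Relation.ReflTransGen.refl

lemma reach_insert_of_mem {G : SimpleGraph V} {s : Finset V} {x a : V}
    (ha : a ∈ s) (hadj : G.Adj x a) : Reach G (insert x s) x a :=
  Relation.ReflTransGen.single ⟨mem_insert_self x s, mem_insert_of_mem ha, hadj⟩

lemma conn_insert {G : SimpleGraph V} {s : Finset V} {x a : V} (hc : conn G s)
    (ha : a ∈ s) (hadj : G.Adj x a) : conn G (insert x s) := by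
  have key : ∀ ⦃b⦄, b ∈ insert x s → Reach G (insert x s) x b := by
    intro b hb
    rcases mem_insert.1 hb with rfl | hb
    · exact Relation.ReflTransGen.refl
    · exact (reach_insert_of_mem ha hadj).trans
        ((hc.2 ha hb).mono (subset_insert _ _))
  exact ⟨⟨x, mem_insert_self x s⟩, fun a' ha' b' hb' => (key ha').symm.trans (key hb')⟩

/-- generic crossing lemma -/
lemma crossing {G : SimpleGraph V} {s : Finset V} {a b : V} (h : Reach G s a b)
    (P : V → Prop) (hPa : P a) (hPb : ¬ P b) :
    ∃ u v, stp G s u v ∧ P u ∧ ¬ P v := by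
  induction h with
  | refl => exact absurd hPa hPb
  | @tail b' c' hab hbc ih =>
    by_cases hPb' : P b'
    · exact ⟨b', c', hbc, hPb', hPb⟩
    · exact ih hPb'

lemma crossing_edge {G : SimpleGraph V} {P Q : Finset V} (hc : conn G (P ∪ Q))
    (hdisj : Disjoint P Q) (hP : P.Nonempty) (hQ : Q.Nonempty) :
    ∃ u ∈ P, ∃ v ∈ Q, G.Adj u v := by
  obtain ⟨p, hp⟩ := hP; obtain ⟨q, hq⟩ := hQ
  have hreach := hc.2 (mem_union_left _ hp) (mem_union_right _ hq)
  obtain ⟨u, v, hst, hu, hv⟩ := crossing hreach (· ∈ P) hp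
    (fun h => (Finset.disjoint_left.1 hdisj) h hq)
  have hvQ : v ∈ Q := (mem_union.1 hst.2.1).resolve_left hv
  exact ⟨u, hu, v, hvQ, hst.2.2⟩

lemma exists_nbr {G : SimpleGraph V} {s : Finset V} {v : V} (h : conn G s) (hv : v ∈ s)
    (hne : (s.erase v).Nonempty) : ∃ u ∈ s.erase v, G.Adj v u := by
  obtain ⟨u0, hu0⟩ := hne
  have hreach := h.2 hv (mem_of_mem_erase hu0)
  rcases Relation.ReflTransGen.cases_head hreach with rfl | ⟨c, hc, _⟩
  · exact absurd rfl (ne_of_mem_erase hu0)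
  · exact ⟨c, mem_erase.2 ⟨(hc.2.2.ne).symm, hc.2.1⟩, hc.2.2⟩

/-- walks as functions with explicit length -/
def WalkIn (G : SimpleGraph V) (s : Finset V) (c : ℕ → V) (n : ℕ) : Prop :=
  (∀ i, i ≤ n → c i ∈ s) ∧ ∀ i, i < n → G.Adj (c i) (c (i+1))

lemma WalkIn.shift {G : SimpleGraph V} {s : Finset V} {c : ℕ → V} {n : ℕ}
    (h : WalkIn G s c n) (k : ℕ) (hk : k ≤ n) : WalkIn G s (fun i => c (i + k)) (n - k) :=
  ⟨fun i hi => h.1 _ (by omega), fun i hi => by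
    have := h.2 (i + k) (by omega); simpa [Nat.add_right_comm] using this⟩

lemma WalkIn.prefix {G : SimpleGraph V} {s : Finset V} {c : ℕ → V} {n : ℕ}
    (h : WalkIn G s c n) (k : ℕ) (hk : k ≤ n) : WalkIn G s c k :=
  ⟨fun i hi => h.1 _ (le_trans hi hk), fun i hi => h.2 i (lt_of_lt_of_le hi hk)⟩

lemma reach_of_walk {G : SimpleGraph V} {s : Finset V} {c : ℕ → V} {n : ℕ}
    (h : WalkIn G s c n) : Reach G s (c 0) (c n) := by
  induction n with
  | zero => exact Relation.ReflTransGen.refl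
  | succ m ih =>
    exact Relation.ReflTransGen.tail (ih (h.prefix m (Nat.le_succ m)))
      ⟨h.1 m (by omega), h.1 (m+1) le_rfl, h.2 m (by omega)⟩

lemma walk_of_reach {G : SimpleGraph V} {s : Finset V} {u v : V} (hu : u ∈ s)
    (h : Reach G s u v) :
    ∃ n c, WalkIn G s c n ∧ c 0 = u ∧ c n = v := by
  induction h with
  | refl => exact ⟨0, fun _ => u, ⟨fun i _ => hu, fun i hi => by omega⟩, rfl, rfl⟩
  | @tail b' c' hab hbc ih =>
    obtain ⟨n, c, hw, hc0, hcn⟩ := ih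
    refine ⟨n+1, fun i => if i ≤ n then c i else c', ⟨?_, ?_⟩, ?_, ?_⟩
    · intro i hi
      by_cases h' : i ≤ n
      · simp only [if_pos h']; exact hw.1 i h'
      · simp only [if_neg h']; exact hbc.2.1
    · intro i hi
      by_cases h' : i < n
      · simp only [if_pos (by omega : i ≤ n), if_pos (by omega : i + 1 ≤ n)]
        exact hw.2 i h'
      · have hin : i = n := by omega
        show G.Adj (if i ≤ n then c i else c') (if i+1 ≤ n then c (i+1) else c')
        rw [if_pos (by omega : i ≤ n), if_neg (by omega : ¬ i + 1 ≤ n), hin, hcn]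
        exact hbc.2.2
    · simp only [if_pos (Nat.zero_le n), hc0]
    · simp only [if_neg (by omega : ¬ n + 1 ≤ n)]

lemma prune {G : SimpleGraph V} {s T : Finset V} (hTs : T ⊆ s) (hT : conn G T)
    (hs : conn G s) (hne : ∃ y ∈ s, y ∉ T) :
    ∃ f ∈ s, f ∉ T ∧ conn G (s.erase f) := by
  classical
  obtain ⟨t0, ht0⟩ := hT.1
  set P : V → ℕ → Prop := fun v n => ∃ t ∈ T, ∃ c, WalkIn G s c n ∧ c 0 = t ∧ c n = v with hPdef
  have hex : ∀ v ∈ s, ∃ n, P v n := by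
    intro v hv
    obtain ⟨n, c, hw, h0, hn⟩ := walk_of_reach (hTs ht0) (hs.2 (hTs ht0) hv)
    exact ⟨n, t0, ht0, c, hw, h0, hn⟩
  set D : V → ℕ := fun v => sInf {n | P v n} with hDdef
  have hDmem : ∀ v ∈ s, P v (D v) := fun v hv => Nat.sInf_mem (hex v hv)
  have hDle : ∀ v m, P v m → D v ≤ m := fun v m hm => Nat.sInf_le hm
  have hDT : ∀ t ∈ T, D t = 0 := by
    intro t ht
    have : P t 0 := ⟨t, ht, fun _ => t, ⟨fun i _ => hTs ht, fun i hi => by omega⟩, rfl, rfl⟩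
    have := hDle t 0 this; omega
  have hsT : (s \ T).Nonempty := by
    obtain ⟨y, hy, hyT⟩ := hne; exact ⟨y, mem_sdiff.2 ⟨hy, hyT⟩⟩
  obtain ⟨f, hf, hfmax⟩ := Finset.exists_max_image (s \ T) D hsT
  rw [mem_sdiff] at hf
  refine ⟨f, hf.1, hf.2, ?_⟩
  have ht0' : t0 ∈ s.erase f := mem_erase.2 ⟨fun h => hf.2 (h ▸ ht0), hTs ht0⟩
  have key : ∀ v ∈ s.erase f, Reach G (s.erase f) t0 v := by
    intro v hv
    rw [mem_erase] at hv
    obtain ⟨t, ht, c, hw, hc0, hcn⟩ := hDmem v hv.2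
    have havoid : ∀ k, k ≤ D v → c k ≠ f := by
      intro k hk hkf
      have hPf : P f k := ⟨t, ht, c, hw.prefix k hk, hc0, hkf⟩
      have hDf : D f ≤ k := hDle f k hPf
      rcases eq_or_lt_of_le hk with rfl | hklt
      · exact hv.1 (hcn.symm.trans hkf)
      · by_cases hvT : v ∈ T
        · have := hDT v hvT; omega
        · have hvmax := hfmax v (mem_sdiff.2 ⟨hv.2, hvT⟩); omega
    have hw' : WalkIn G (s.erase f) c (D v) :=
      ⟨fun i hi => mem_erase.2 ⟨havoid i hi, hw.1 i hi⟩, hw.2⟩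
    have hr := reach_of_walk hw'
    rw [hc0, hcn] at hr
    exact (((hT.2 ht0 ht).mono (fun u hu => mem_erase.2
      ⟨fun h => hf.2 (by rw [← h]; exact hu), hTs hu⟩)).trans hr)
  exact ⟨⟨t0, ht0'⟩, fun a ha b hb => ((key a ha).symm).trans (key b hb)⟩

lemma prune_to {G : SimpleGraph V} :
    ∀ (d : ℕ) {s T : Finset V}, T ⊆ s → conn G T → conn G s → ∀ k, s.card = k + d →
      T.card ≤ k → ∃ s', T ⊆ s' ∧ s' ⊆ s ∧ s'.card = k ∧ conn G s' := by
  intro d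
  induction d with
  | zero =>
    intro s T hTs hT hs k hcard hk
    exact ⟨s, hTs, Finset.Subset.refl s, by omega, hs⟩
  | succ d ih =>
    intro s T hTs hT hs k hcard hk
    have hne : ∃ y ∈ s, y ∉ T := by
      by_contra hcon; push_neg at hcon
      have hsub : s ⊆ T := fun y hy => hcon y hy
      have := Finset.card_le_card hsub
      have := Finset.card_le_card hTs
      omega
    obtain ⟨f, hfs, hfT, hconn⟩ := prune hTs hT hs hne
    have hTs' : T ⊆ s.erase f := fun t ht => mem_erase.2 ⟨fun h => hfT (h ▸ ht), hTs ht⟩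
    obtain ⟨s', h1, h2, h3, h4⟩ := ih hTs' hT hconn k
      (by rw [Finset.card_erase_of_mem hfs]; omega) hk
    exact ⟨s', h1, h2.trans (Finset.erase_subset f s), h3, h4⟩

noncomputable def CComp (G : SimpleGraph V) (U : Finset V) (v : V) : Finset V :=
  @Finset.filter _ (fun u => Reach G U v u) (Classical.decPred _) U

lemma mem_CComp {G : SimpleGraph V} {U : Finset V} {v u : V} :
    u ∈ CComp G U v ↔ u ∈ U ∧ Reach G U v u := by
  classical
  unfold CComp
  rw [Finset.mem_filter]

lemma self_mem_CComp {G : SimpleGraph V} {U : Finset V} {v : V} (hv : v ∈ U) :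
    v ∈ CComp G U v := mem_CComp.2 ⟨hv, Relation.ReflTransGen.refl⟩

lemma adj_mem_CComp {G : SimpleGraph V} {U : Finset V} {v u w : V}
    (hu : u ∈ CComp G U v) (hw : w ∈ U) (hadj : G.Adj u w) : w ∈ CComp G U v := by
  rw [mem_CComp] at hu ⊢
  exact ⟨hw, hu.2.tail ⟨hu.1, hw, hadj⟩⟩

lemma reach_in_CComp {G : SimpleGraph V} {U : Finset V} {v u : V} (hv : v ∈ U)
    (hu : u ∈ CComp G U v) : Reach G (CComp G U v) v u := by
  rw [mem_CComp] at hu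
  obtain ⟨n, c, hw, hc0, hcn⟩ := walk_of_reach hv hu.2
  have hmem : ∀ k, k ≤ n → c k ∈ CComp G U v := by
    intro k hk
    have := reach_of_walk (hw.prefix k hk)
    rw [hc0] at this
    exact mem_CComp.2 ⟨hw.1 k hk, this⟩
  have hw' : WalkIn G (CComp G U v) c n := ⟨hmem, hw.2⟩
  have := reach_of_walk hw'
  rwa [hc0, hcn] at this

lemma conn_CComp {G : SimpleGraph V} {U : Finset V} {v : V} (hv : v ∈ U) :
    conn G (CComp G U v) :=
  ⟨⟨v, self_mem_CComp hv⟩, fun a ha b hb =>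
    ((reach_in_CComp hv ha).symm).trans (reach_in_CComp hv hb)⟩

lemma conn_subset_CComp {G : SimpleGraph V} {U W : Finset V} {v x : V} (hW : conn G W)
    (hWU : W ⊆ U) (hx : x ∈ W) (hxC : x ∈ CComp G U v) : W ⊆ CComp G U v := by
  intro w hw
  rw [mem_CComp] at hxC ⊢
  exact ⟨hWU hw, hxC.2.trans ((hW.2 hx hw).mono hWU)⟩

lemma conn_erase_simplicial {G : SimpleGraph V} {s : Finset V} {v : V} (hc : conn G s)
    (hsimp : ∀ a ∈ s, ∀ b ∈ s, G.Adj v a → G.Adj v b → a ≠ b → G.Adj a b)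
    (hne : (s.erase v).Nonempty) : conn G (s.erase v) := by
  have key : ∀ n, ∀ c : ℕ → V, WalkIn G s c n → c 0 ≠ v → c n ≠ v →
      Reach G (s.erase v) (c 0) (c n) := by
    intro n
    induction n using Nat.strong_induction_on with
    | _ n ih =>
      intro c hw h0 hn
      match n, hw, hn with
      | 0, hw, hn => exact Relation.ReflTransGen.refl
      | (k+1), hw, hn =>
        by_cases hd : c 1 = v
        · -- next vertex is v, jump over it
          match k, hw, hn with
          | 0, hw, hn => exact absurd hd hn
          | (k'+1), hw, hn =>
            have hadj1 : G.Adj (c 0) (c 1) := hw.2 0 (by omega)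
            have hadj2 : G.Adj (c 1) (c 2) := hw.2 1 (by omega)
            have he : c 2 ≠ v := by rw [hd] at hadj2; exact fun h => (h ▸ hadj2).ne rfl
            have hshift := hw.shift 2 (by omega)
            have hrest : Reach G (s.erase v) (c 2) (c (k' + 2)) := by
              have h5 := ih k' (by omega) (fun i => c (i + 2)) (by exact hshift)
                (by exact he) (by exact hn)
              exact h5
            by_cases hae : c 0 = c 2
            · rw [hae]; exact hrest
            · have hAdj : G.Adj (c 0) (c 2) := by
                refine hsimp (c 0) (hw.1 0 (by omega)) (c 2) (hw.1 2 (by omega)) ?_ ?_ hae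
                · rw [hd] at hadj1; exact hadj1.symm
                · rw [hd] at hadj2; exact hadj2
              have hstep : stp G (s.erase v) (c 0) (c 2) :=
                ⟨mem_erase.2 ⟨h0, hw.1 0 (by omega)⟩, mem_erase.2 ⟨he, hw.1 2 (by omega)⟩, hAdj⟩
              exact Relation.ReflTransGen.head hstep hrest
        · have hadj1 : G.Adj (c 0) (c 1) := hw.2 0 (by omega)
          have hshift := hw.shift 1 (by omega)
          have hrest : Reach G (s.erase v) (c 1) (c (k + 1)) := by
            have h5 := ih k (by omega) (fun i => c (i + 1)) (by exact hshift)
              (by exact hd) (by exact hn)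
            exact h5
          have hstep : stp G (s.erase v) (c 0) (c 1) :=
            ⟨mem_erase.2 ⟨h0, hw.1 0 (by omega)⟩, mem_erase.2 ⟨hd, hw.1 1 (by omega)⟩, hadj1⟩
          exact Relation.ReflTransGen.head hstep hrest
  refine ⟨hne, ?_⟩
  intro a ha b hb
  rw [mem_erase] at ha hb
  obtain ⟨n, c, hw, hc0, hcn⟩ := walk_of_reach ha.2 (hc.2 ha.2 hb.2)
  have := key n c hw (hc0 ▸ ha.1) (hcn ▸ hb.1)
  rwa [hc0, hcn] at this

lemma hasInducedCycle_of_data {G : SimpleGraph V} {m : ℕ} (hm : 4 ≤ m) (g : ℕ → V)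
    (hinj : ∀ i < m, ∀ j < m, g i = g j → i = j)
    (hadj : ∀ i, i + 1 < m → G.Adj (g i) (g (i + 1)))
    (hlast : G.Adj (g (m - 1)) (g 0))
    (hchord : ∀ i j, i + 2 ≤ j → j < m → ¬(i = 0 ∧ j = m - 1) → ¬ G.Adj (g i) (g j)) :
    HasInducedCycle G m := by
  have main : ∀ i j : ℕ, i < j → j < m → (G.Adj (g i) (g j) ↔ (j = i + 1 ∨ (i = 0 ∧ j = m - 1))) := by
    intro i j hij hjm
    constructor
    · intro hA
      by_contra hcon
      push_neg at hcon
      exact hchord i j (by omega) hjm (fun h => hcon.2 h.1 h.2) hA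
    · rintro (rfl | ⟨rfl, rfl⟩)
      · exact hadj i hjm
      · exact hlast.symm
  have hmod : ∀ a : ℕ, a < m → (a + 1) % m = if a + 1 = m then 0 else a + 1 := by
    intro a ha
    by_cases h : a + 1 = m
    · rw [if_pos h, h, Nat.mod_self]
    · rw [if_neg h, Nat.mod_eq_of_lt (by omega)]
  refine ⟨fun i => g i, ?_, ?_⟩
  · intro i j hij
    exact Fin.ext (hinj i i.2 j j.2 hij)
  · intro i j
    show G.Adj (g (i:ℕ)) (g (j:ℕ)) ↔ ((i:ℕ) + 1) % m = (j:ℕ) ∨ ((j:ℕ) + 1) % m = (i:ℕ)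
    have hi := i.2
    have hj := j.2
    rcases lt_trichotomy (i : ℕ) (j : ℕ) with h | h | h
    · rw [main i j h hj, hmod i hi, hmod j hj]
      constructor
      · intro hyp
        rcases hyp with h1 | ⟨h1, h2⟩
        · left; rw [if_neg (by omega)]; omega
        · right; rw [if_pos (by omega)]; omega
      · intro hyp
        rcases hyp with h1 | h1
        · by_cases hc : (i : ℕ) + 1 = m
          · rw [if_pos hc] at h1; omega
          · rw [if_neg hc] at h1; left; omega
        · by_cases hc : (j : ℕ) + 1 = m
          · rw [if_pos hc] at h1; right; omega
          · rw [if_neg hc] at h1; omega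
    · have : g i = g j := by rw [h]
      rw [this]
      simp only [SimpleGraph.irrefl, false_iff]
      rw [hmod j hj]  -- note i = j as naturals
      intro hyp
      rcases hyp with h1 | h1
      · by_cases hc : (i : ℕ) + 1 = m
        · rw [hmod i hi, if_pos hc] at h1; omega
        · rw [hmod i hi, if_neg hc] at h1; omega
      · by_cases hc : (j : ℕ) + 1 = m
        · rw [if_pos hc] at h1; omega
        · rw [if_neg hc] at h1; omega
    · rw [G.adj_comm, main j i h hi, hmod i hi, hmod j hj]
      constructor
      · intro hyp
        rcases hyp with h1 | ⟨h1, h2⟩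
        · right; rw [if_neg (by omega)]; omega
        · left; rw [if_pos (by omega)]; omega
      · intro hyp
        rcases hyp with h1 | h1
        · by_cases hc : (i : ℕ) + 1 = m
          · rw [if_pos hc] at h1; right; omega
          · rw [if_neg hc] at h1; omega
        · by_cases hc : (j : ℕ) + 1 = m
          · rw [if_pos hc] at h1; omega
          · rw [if_neg hc] at h1; left; omega

lemma exists_induced_path {G : SimpleGraph V} {R : Finset V} {x y : V}
    (hconnR : conn G R) (hx : x ∉ R) (hy : y ∉ R) (hxy : x ≠ y) (hnadj : ¬ G.Adj x y)
    (hxR : ∃ u ∈ R, G.Adj x u) (hyR : ∃ u ∈ R, G.Adj y u) :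
    ∃ n c, 2 ≤ n ∧ WalkIn G (insert x (insert y R)) c n ∧ c 0 = x ∧ c n = y ∧
      (∀ k, 0 < k → k < n → c k ∈ R) ∧
      (∀ i j, i < j → j ≤ n → c i ≠ c j) ∧
      (∀ i j, i + 2 ≤ j → j ≤ n → ¬(i = 0 ∧ j = n) → ¬ G.Adj (c i) (c j)) := by
  classical
  set s' : Finset V := insert x (insert y R) with hs'
  have hxs' : x ∈ s' := mem_insert_self _ _
  have hys' : y ∈ s' := mem_insert_of_mem (mem_insert_self _ _)
  have hRs' : R ⊆ s' := fun u hu => mem_insert_of_mem (mem_insert_of_mem hu)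
  set Q : ℕ → Prop := fun n => ∃ c, WalkIn G s' c n ∧ c 0 = x ∧ c n = y with hQ
  have hex : ∃ n, Q n := by
    obtain ⟨ux, huxR, huxadj⟩ := hxR
    obtain ⟨uy, huyR, huyadj⟩ := hyR
    have h1 : Reach G s' x ux := Relation.ReflTransGen.single ⟨hxs', hRs' huxR, huxadj⟩
    have h2 : Reach G s' ux uy := (hconnR.2 huxR huyR).mono hRs'
    have h3 : Reach G s' uy y := Relation.ReflTransGen.single ⟨hRs' huyR, hys', huyadj.symm⟩
    obtain ⟨n, c, hw, h0, hn⟩ := walk_of_reach hxs' ((h1.trans h2).trans h3)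
    exact ⟨n, c, hw, h0, hn⟩
  obtain ⟨n₀, hQn₀, hmin⟩ : ∃ n, Q n ∧ ∀ m, Q m → n ≤ m :=
    ⟨sInf {n | Q n}, Nat.sInf_mem hex, fun m hm => Nat.sInf_le hm⟩
  obtain ⟨c, hw, hc0, hcn⟩ := hQn₀
  have hge1 : 1 ≤ n₀ := by
    rcases Nat.eq_zero_or_pos n₀ with h | h
    · exfalso; apply hxy; rw [← hc0, ← hcn, h]
    · exact h
  have hge2 : 2 ≤ n₀ := by
    rcases Nat.lt_or_ge n₀ 2 with h | h
    · exfalso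
      have h1 : n₀ = 1 := by omega
      have hadj01 := hw.2 0 (by omega)
      rw [hc0] at hadj01
      rw [h1] at hcn
      rw [hcn] at hadj01
      exact hnadj hadj01
    · exact h
  have hint : ∀ k, 0 < k → k < n₀ → c k ∈ R := by
    intro k hk0 hkn
    have hks' := hw.1 k (le_of_lt hkn)
    rw [hs'] at hks'
    rcases mem_insert.1 hks' with hkx | hks'
    · exfalso
      have hsh := hw.shift k (le_of_lt hkn)
      have hQ' : Q (n₀ - k) := ⟨fun i => c (i + k), hsh, by dsimp only; rw [Nat.zero_add]; exact hkx, by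
        dsimp only
        have hnk : n₀ - k + k = n₀ := by omega
        rw [hnk]; exact hcn⟩
      have := hmin _ hQ'; omega
    · rcases mem_insert.1 hks' with hky | hkR
      · exfalso
        have hQ' : Q k := ⟨c, hw.prefix k (le_of_lt hkn), hc0, hky⟩
        have := hmin _ hQ'; omega
      · exact hkR
  have hinj : ∀ i j, i < j → j ≤ n₀ → c i ≠ c j := by
    intro i j hij hjn heq
    rcases eq_or_lt_of_le hjn with rfl | hjlt
    · rcases Nat.eq_zero_or_pos i with rfl | hi0
      · exact hxy (hc0 ▸ hcn ▸ heq)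
      · exact hy (hcn ▸ heq ▸ hint i hi0 hij)
    · have hnew : Q (n₀ - (j - i)) := by
        refine ⟨fun t => if t ≤ i then c t else c (t + (j - i)), ⟨?_, ?_⟩, ?_, ?_⟩
        · intro t ht
          dsimp only
          by_cases h' : t ≤ i
          · rw [if_pos h']; exact hw.1 t (by omega)
          · rw [if_neg h']; exact hw.1 _ (by omega)
        · intro t ht
          dsimp only
          by_cases h' : t + 1 ≤ i
          · rw [if_pos (by omega : t ≤ i), if_pos h']; exact hw.2 t (by omega)
          · by_cases h'' : t ≤ i
            · have hti : t = i := by omega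
              rw [if_pos h'', if_neg h', hti]
              have hseam : i + 1 + (j - i) = j + 1 := by omega
              rw [hseam, heq]
              exact hw.2 j (by omega)
            · rw [if_neg h'', if_neg h']
              have hsh : t + (j - i) + 1 = t + 1 + (j - i) := by omega
              rw [← hsh]
              exact hw.2 _ (by omega)
        · dsimp only; rw [if_pos (Nat.zero_le i)]; exact hc0
        · dsimp only
          rw [if_neg (by omega : ¬ n₀ - (j - i) ≤ i)]
          have hnk : n₀ - (j - i) + (j - i) = n₀ := by omega
          rw [hnk]; exact hcn
      have := hmin _ hnew; omega
  have hchord : ∀ i j, i + 2 ≤ j → j ≤ n₀ → ¬(i = 0 ∧ j = n₀) → ¬ G.Adj (c i) (c j) := by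
    intro i j hij hjn hnot hadj
    have hnew : Q (n₀ - (j - i - 1)) := by
      refine ⟨fun t => if t ≤ i then c t else c (t + (j - i - 1)), ⟨?_, ?_⟩, ?_, ?_⟩
      · intro t ht
        dsimp only
        by_cases h' : t ≤ i
        · rw [if_pos h']; exact hw.1 t (by omega)
        · rw [if_neg h']; exact hw.1 _ (by omega)
      · intro t ht
        dsimp only
        by_cases h' : t + 1 ≤ i
        · rw [if_pos (by omega : t ≤ i), if_pos h']; exact hw.2 t (by omega)
        · by_cases h'' : t ≤ i
          · have hti : t = i := by omega
            rw [if_pos h'', if_neg h', hti]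
            have hseam : i + 1 + (j - i - 1) = j := by omega
            rw [hseam]
            exact hadj
          · rw [if_neg h'', if_neg h']
            have hsh : t + (j - i - 1) + 1 = t + 1 + (j - i - 1) := by omega
            rw [← hsh]
            exact hw.2 _ (by omega)
      · dsimp only; rw [if_pos (Nat.zero_le i)]; exact hc0
      · dsimp only
        rw [if_neg (by omega : ¬ n₀ - (j - i - 1) ≤ i)]
        have hnk : n₀ - (j - i - 1) + (j - i - 1) = n₀ := by omega
        rw [hnk]; exact hcn
    have := hmin _ hnew; omega
  exact ⟨n₀, c, hge2, hw, hc0, hcn, hint, hinj, hchord⟩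

lemma CComp_subset {G : SimpleGraph V} {U : Finset V} {v : V} : CComp G U v ⊆ U :=
  fun u hu => (mem_CComp.1 hu).1

def Simpl (G : SimpleGraph V) (s : Finset V) (v : V) : Prop :=
  ∀ a ∈ s, ∀ b ∈ s, G.Adj v a → G.Adj v b → a ≠ b → G.Adj a b

lemma dirac2 (G : SimpleGraph V) (hch : Chordal G) :
    ∀ n : ℕ, ∀ s : Finset V, s.card ≤ n →
      (∀ p ∈ s, ∀ q ∈ s, p ≠ q → G.Adj p q) ∨
      (∃ v ∈ s, ∃ w ∈ s, v ≠ w ∧ ¬ G.Adj v w ∧ Simpl G s v ∧ Simpl G s w) := by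
  intro n
  induction n with
  | zero =>
    intro s hcard
    left
    intro p hp
    exfalso
    have := Finset.card_pos.2 ⟨p, hp⟩
    omega
  | succ n ih =>
    intro s hcard
    by_cases hcomp : ∀ p ∈ s, ∀ q ∈ s, p ≠ q → G.Adj p q
    · exact Or.inl hcomp
    right
    push_neg at hcomp
    obtain ⟨a, ha, b, hb, hab, hnadj⟩ := hcomp
    classical
    set Sep : Finset V → Prop :=
      fun X => X ⊆ s ∧ a ∉ X ∧ b ∉ X ∧ ¬ Reach G (s \ X) a b with hSepDef
    have hS0 : Sep ((s.erase a).erase b) := by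
      refine ⟨(Finset.erase_subset _ _).trans (Finset.erase_subset _ _), ?_, ?_, ?_⟩
      · intro h
        exact (Finset.mem_erase.1 (Finset.mem_of_mem_erase h)).1 rfl
      · intro h
        exact (Finset.mem_erase.1 h).1 rfl
      · intro hreach
        have hsub : ∀ u ∈ s \ (s.erase a).erase b, u = a ∨ u = b := by
          intro u hu
          rw [Finset.mem_sdiff] at hu
          by_contra hcon
          push_neg at hcon
          exact hu.2 (Finset.mem_erase.2 ⟨hcon.2, Finset.mem_erase.2 ⟨hcon.1, hu.1⟩⟩)
        rcases Relation.ReflTransGen.cases_head hreach with heq | ⟨cc, hstp, _⟩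
        · exact hab heq
        · rcases hsub cc hstp.2.1 with rfl | rfl
          · exact hstp.2.2.ne rfl
          · exact hnadj hstp.2.2
    obtain ⟨S, hSmem, hSmin⟩ := Finset.exists_min_image
      ((s.powerset).filter (fun X => Sep X)) Finset.card
      ⟨(s.erase a).erase b, Finset.mem_filter.2 ⟨Finset.mem_powerset.2 hS0.1, hS0⟩⟩
    have hSep : Sep S := (Finset.mem_filter.1 hSmem).2
    have has' : a ∈ s \ S := Finset.mem_sdiff.2 ⟨ha, hSep.2.1⟩
    have hbs' : b ∈ s \ S := Finset.mem_sdiff.2 ⟨hb, hSep.2.2.1⟩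
    set A := CComp G (s \ S) a with hA
    set B := CComp G (s \ S) b with hB
    have haA : a ∈ A := self_mem_CComp has'
    have hbB : b ∈ B := self_mem_CComp hbs'
    have hbnA : b ∉ A := fun h => hSep.2.2.2 (mem_CComp.1 h).2
    have hanB : a ∉ B := fun h => hSep.2.2.2 ((mem_CComp.1 h).2).symm
    have hABdisj : ∀ u, u ∈ A → u ∈ B → False := by
      intro u huA huB
      exact hSep.2.2.2 ((mem_CComp.1 huA).2.trans ((mem_CComp.1 huB).2).symm)
    have hnoedge : ∀ u ∈ A, ∀ w ∈ B, ¬ G.Adj u w := by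
      intro u hu w hw hadj
      exact hABdisj w (adj_mem_CComp hu (CComp_subset hw) hadj) hw
    have hside : ∀ x ∈ S, (∃ u ∈ A, G.Adj u x) ∧ (∃ w ∈ B, G.Adj x w) := by
      intro x hx
      have hxs : x ∈ s := hSep.1 hx
      have hnotSep : ¬ Sep (S.erase x) := by
        intro hcon
        have hmem' := Finset.mem_filter.2
          ⟨Finset.mem_powerset.2 hcon.1, hcon⟩
        have h1 := hSmin _ hmem'
        have h2 := Finset.card_erase_of_mem hx
        have h3 := Finset.card_pos.2 ⟨x, hx⟩
        omega
      have hreach : Reach G (s \ S.erase x) a b := by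
        by_contra hre
        exact hnotSep ⟨(Finset.erase_subset _ _).trans hSep.1,
          fun h => hSep.2.1 (Finset.mem_of_mem_erase h),
          fun h => hSep.2.2.1 (Finset.mem_of_mem_erase h), hre⟩
      constructor
      · obtain ⟨u, cc, hstp, huA, hccA⟩ := crossing hreach (· ∈ A) haA hbnA
        have hcx : cc = x := by
          by_contra hne
          apply hccA
          have hccs : cc ∈ s \ S := by
            have h5 := hstp.2.1
            rw [Finset.mem_sdiff] at h5 ⊢
            exact ⟨h5.1, fun hcs => h5.2 (Finset.mem_erase.2 ⟨hne, hcs⟩)⟩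
          exact adj_mem_CComp huA hccs hstp.2.2
        exact ⟨u, huA, hcx ▸ hstp.2.2⟩
      · obtain ⟨u, cc, hstp, huB, hccB⟩ := crossing hreach.symm (· ∈ B) hbB hanB
        have hcx : cc = x := by
          by_contra hne
          apply hccB
          have hccs : cc ∈ s \ S := by
            have h5 := hstp.2.1
            rw [Finset.mem_sdiff] at h5 ⊢
            exact ⟨h5.1, fun hcs => h5.2 (Finset.mem_erase.2 ⟨hne, hcs⟩)⟩
          exact adj_mem_CComp huB hccs hstp.2.2
        exact ⟨u, huB, (hcx ▸ hstp.2.2).symm⟩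
    by_cases hclq : ∀ p ∈ S, ∀ q ∈ S, p ≠ q → G.Adj p q
    · -- S is a clique: recurse on both sides
      have hconnA : conn G A := conn_CComp has'
      have hconnB : conn G B := conn_CComp hbs'
      have hAs : A ⊆ s := CComp_subset.trans (Finset.sdiff_subset)
      have hBs : B ⊆ s := CComp_subset.trans (Finset.sdiff_subset)
      have hscard : 1 ≤ s.card := Finset.card_pos.2 ⟨a, ha⟩
      -- A side
      have hvA : ∃ v ∈ A, Simpl G s v := by
        have hsub : A ∪ S ⊆ s.erase b := by
          intro u hu
          refine Finset.mem_erase.2 ⟨?_, ?_⟩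
          · rintro rfl
            rcases Finset.mem_union.1 hu with h | h
            · exact hbnA h
            · exact hSep.2.2.1 h
          · rcases Finset.mem_union.1 hu with h | h
            · exact hAs h
            · exact hSep.1 h
        have hcard₁ : (A ∪ S).card ≤ n := by
          have h1 := Finset.card_le_card hsub
          have h2 := Finset.card_erase_of_mem hb
          omega
        have hx0 : ∃ v ∈ A, Simpl G (A ∪ S) v := by
          rcases ih (A ∪ S) hcard₁ with hfull | ⟨v, hv, w, hw, hvw, hnvw, hsv, hsw⟩
          · exact ⟨a, haA, fun a' ha' b' hb' _ _ hne => hfull a' ha' b' hb' hne⟩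
          · by_cases hvA : v ∈ A
            · exact ⟨v, hvA, hsv⟩
            · by_cases hwA : w ∈ A
              · exact ⟨w, hwA, hsw⟩
              · exfalso
                have hvS : v ∈ S := (Finset.mem_union.1 hv).resolve_left hvA
                have hwS : w ∈ S := (Finset.mem_union.1 hw).resolve_left hwA
                exact hnvw (hclq v hvS w hwS hvw)
        obtain ⟨v, hvA, hsimp₁⟩ := hx0
        refine ⟨v, hvA, ?_⟩
        have hnbr : ∀ u ∈ s, G.Adj v u → u ∈ A ∪ S := by
          intro u hu hadj
          by_cases huS : u ∈ S
          · exact Finset.mem_union_right _ huS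
          · exact Finset.mem_union_left _
              (adj_mem_CComp hvA (Finset.mem_sdiff.2 ⟨hu, huS⟩) hadj)
        exact fun a' ha' b' hb' h1 h2 hne =>
          hsimp₁ a' (hnbr a' ha' h1) b' (hnbr b' hb' h2) h1 h2 hne
      -- B side
      have hwB : ∃ w ∈ B, Simpl G s w := by
        have hsub : B ∪ S ⊆ s.erase a := by
          intro u hu
          refine Finset.mem_erase.2 ⟨?_, ?_⟩
          · rintro rfl
            rcases Finset.mem_union.1 hu with h | h
            · exact hanB h
            · exact hSep.2.1 h
          · rcases Finset.mem_union.1 hu with h | h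
            · exact hBs h
            · exact hSep.1 h
        have hcard₁ : (B ∪ S).card ≤ n := by
          have h1 := Finset.card_le_card hsub
          have h2 := Finset.card_erase_of_mem ha
          omega
        have hx0 : ∃ v ∈ B, Simpl G (B ∪ S) v := by
          rcases ih (B ∪ S) hcard₁ with hfull | ⟨v, hv, w, hw, hvw, hnvw, hsv, hsw⟩
          · exact ⟨b, hbB, fun a' ha' b' hb' _ _ hne => hfull a' ha' b' hb' hne⟩
          · by_cases hvB : v ∈ B
            · exact ⟨v, hvB, hsv⟩
            · by_cases hwB : w ∈ B
              · exact ⟨w, hwB, hsw⟩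
              · exfalso
                have hvS : v ∈ S := (Finset.mem_union.1 hv).resolve_left hvB
                have hwS : w ∈ S := (Finset.mem_union.1 hw).resolve_left hwB
                exact hnvw (hclq v hvS w hwS hvw)
        obtain ⟨v, hvB, hsimp₁⟩ := hx0
        refine ⟨v, hvB, ?_⟩
        have hnbr : ∀ u ∈ s, G.Adj v u → u ∈ B ∪ S := by
          intro u hu hadj
          by_cases huS : u ∈ S
          · exact Finset.mem_union_right _ huS
          · exact Finset.mem_union_left _
              (adj_mem_CComp hvB (Finset.mem_sdiff.2 ⟨hu, huS⟩) hadj)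
        exact fun a' ha' b' hb' h1 h2 hne =>
          hsimp₁ a' (hnbr a' ha' h1) b' (hnbr b' hb' h2) h1 h2 hne
      obtain ⟨v, hvA, hsv⟩ := hvA
      obtain ⟨w, hwB, hsw⟩ := hwB
      refine ⟨v, hAs hvA, w, hBs hwB, ?_, hnoedge v hvA w hwB, hsv, hsw⟩
      rintro rfl
      exact hABdisj v hvA hwB
    · -- S is not a clique: build an induced cycle, contradiction
      exfalso
      push_neg at hclq
      obtain ⟨p, hp, q, hq, hpq, hnpq⟩ := hclq
      have hpS : p ∉ s \ S := fun h => (Finset.mem_sdiff.1 h).2 hp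
      have hqS : q ∉ s \ S := fun h => (Finset.mem_sdiff.1 h).2 hq
      have hpA : p ∉ A := fun h => hpS (CComp_subset h)
      have hqA : q ∉ A := fun h => hqS (CComp_subset h)
      have hpB : p ∉ B := fun h => hpS (CComp_subset h)
      have hqB : q ∉ B := fun h => hqS (CComp_subset h)
      obtain ⟨upA, hupA, hadjpA⟩ := (hside p hp).1
      obtain ⟨uqA, huqA, hadjqA⟩ := (hside q hq).1
      obtain ⟨wpB, hwpB, hadjpB⟩ := (hside p hp).2
      obtain ⟨wqB, hwqB, hadjqB⟩ := (hside q hq).2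
      obtain ⟨n₁, c, hn₁, hwc, hc0, hcn, hcint, hcinj, hcchord⟩ :=
        exists_induced_path (conn_CComp has') hpA hqA hpq hnpq
          ⟨upA, hupA, hadjpA.symm⟩ ⟨uqA, huqA, hadjqA.symm⟩
      obtain ⟨n₂, d, hn₂, hwd, hd0, hdn, hdint, hdinj, hdchord⟩ :=
        exists_induced_path (conn_CComp hbs') hpB hqB hpq hnpq
          ⟨wpB, hwpB, hadjpB⟩ ⟨wqB, hwqB, hadjqB⟩
      set m := n₁ + n₂ with hm
      set g : ℕ → V := fun k => if k ≤ n₁ then c k else d (n₁ + n₂ - k) with hg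
      have hgle : ∀ k, k ≤ n₁ → g k = c k := fun k hk => if_pos hk
      have hggt : ∀ k, n₁ < k → g k = d (n₁ + n₂ - k) := fun k hk => if_neg (by omega)
      -- interior values
      have hcA : ∀ k, 0 < k → k < n₁ → c k ∈ A := hcint
      have hdB : ∀ k, 0 < k → k < n₂ → d k ∈ B := hdint
      have key : ∀ i j, i < j → j < m → g i ≠ g j := by
        intro i j hij hjm heq
        by_cases hji : j ≤ n₁
        · rw [hgle i (by omega), hgle j hji] at heq
          exact hcinj i j hij hji heq
        · push_neg at hji
          have hkj : 1 ≤ n₁ + n₂ - j ∧ n₁ + n₂ - j ≤ n₂ - 1 := by omega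
          have hdkB : d (n₁ + n₂ - j) ∈ B := hdB _ (by omega) (by omega)
          rw [hggt j hji] at heq
          by_cases hii : i ≤ n₁
          · rw [hgle i hii] at heq
            rcases Nat.eq_zero_or_pos i with rfl | hi0
            · rw [hc0] at heq
              exact hpB (heq ▸ hdkB)
            · rcases eq_or_lt_of_le hii with rfl | hilt
              · rw [hcn] at heq
                exact hqB (heq ▸ hdkB)
              · exact hABdisj _ (heq ▸ hcA i hi0 hilt) hdkB
          · push_neg at hii
            rw [hggt i hii] at heq
            exact hdinj (n₁ + n₂ - j) (n₁ + n₂ - i) (by omega) (by omega) heq.symm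
      have hadjg : ∀ i, i + 1 < m → G.Adj (g i) (g (i + 1)) := by
        intro i hi
        by_cases h1 : i + 1 ≤ n₁
        · rw [hgle i (by omega), hgle (i + 1) h1]
          exact hwc.2 i (by omega)
        · by_cases h2 : i ≤ n₁
          · have hieq : i = n₁ := by omega
            rw [hgle i h2, hggt (i + 1) (by omega)]
            have h3 : n₁ + n₂ - (i + 1) = n₂ - 1 := by omega
            rw [h3, hieq, hcn, ← hdn]
            have h4 := hwd.2 (n₂ - 1) (by omega)
            have h5 : n₂ - 1 + 1 = n₂ := by omega
            rw [h5] at h4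
            exact h4.symm
          · push_neg at h2
            rw [hggt i h2, hggt (i + 1) (by omega)]
            have h4 := hwd.2 (n₁ + n₂ - (i + 1)) (by omega)
            have h5 : n₁ + n₂ - (i + 1) + 1 = n₁ + n₂ - i := by omega
            rw [h5] at h4
            exact h4.symm
      have hlastg : G.Adj (g (m - 1)) (g 0) := by
        rw [hggt (m - 1) (by omega), hgle 0 (by omega)]
        have h3 : n₁ + n₂ - (m - 1) = 1 := by omega
        rw [h3, hc0, ← hd0]
        exact (hwd.2 0 (by omega)).symm
      have hchordg : ∀ i j, i + 2 ≤ j → j < m → ¬(i = 0 ∧ j = m - 1) → ¬ G.Adj (g i) (g j) := by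
        intro i j hij hjm hnot hadj
        by_cases hji : j ≤ n₁
        · rw [hgle i (by omega), hgle j hji] at hadj
          by_cases hend : i = 0 ∧ j = n₁
          · rw [hend.1, hend.2, hc0, hcn] at hadj
            exact hnpq hadj
          · exact hcchord i j hij hji hend hadj
        · push_neg at hji
          set k := n₁ + n₂ - j with hk
          have hk1 : 1 ≤ k := by omega
          have hk2 : k ≤ n₂ - 1 := by omega
          rw [hggt j hji] at hadj
          by_cases hii : i ≤ n₁
          · rcases Nat.eq_zero_or_pos i with rfl | hi0
            · rw [hgle 0 (by omega), hc0, ← hd0] at hadj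
              by_cases hk1' : k = 1
              · exact hnot ⟨rfl, by omega⟩
              · exact hdchord 0 k (by omega) (by omega) (fun h => by omega) hadj
            · rcases eq_or_lt_of_le hii with rfl | hilt
              · rw [hgle i le_rfl, hcn, ← hdn] at hadj
                exact hdchord k n₂ (by omega) le_rfl (fun h => by omega) hadj.symm
              · rw [hgle i hii] at hadj
                exact hnoedge _ (hcA i hi0 hilt) _ (hdB k (by omega) (by omega)) hadj
          · push_neg at hii
            rw [hggt i hii] at hadj
            exact hdchord k (n₁ + n₂ - i) (by omega) (by omega)
              (fun h => by omega) hadj.symm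
      exact hch m (by omega) (hasInducedCycle_of_data (by omega) g
        (fun i hi j hj heq => by
          rcases lt_trichotomy i j with h | h | h
          · exact absurd heq (key i j h hj)
          · exact h
          · exact absurd heq.symm (key j i h hi))
        hadjg hlastg hchordg)

lemma dirac (G : SimpleGraph V) (hch : Chordal G) (s : Finset V) (hne : s.Nonempty) :
    ∃ v ∈ s, Simpl G s v := by
  rcases dirac2 G hch s.card s le_rfl with hfull | ⟨v, hv, _, _, _, _, hsv, _⟩
  · obtain ⟨v, hv⟩ := hne
    exact ⟨v, hv, fun a' ha' b' hb' _ _ hne' => hfull a' ha' b' hb' hne'⟩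
  · exact ⟨v, hv, hsv⟩

lemma helly (G : SimpleGraph V) (hch : Chordal G) :
    ∀ n : ℕ, ∀ s : Finset V, s.card ≤ n → ∀ 𝒲 : Set (Finset V),
      (∀ W ∈ 𝒲, W ⊆ s ∧ conn G W) →
      (∀ W ∈ 𝒲, ∀ W' ∈ 𝒲, ∃ u ∈ W, ∃ w ∈ W', u = w ∨ G.Adj u w) →
      ∃ K : Finset V, (∀ p ∈ K, ∀ q ∈ K, p ≠ q → G.Adj p q) ∧
        ∀ W ∈ 𝒲, (K ∩ W).Nonempty := by
  intro n
  induction n with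
  | zero =>
    intro s hcard 𝒲 hW htouch
    refine ⟨∅, by simp, ?_⟩
    intro W hW'
    exfalso
    obtain ⟨x, hx⟩ := (hW W hW').2.1
    have hxs := (hW W hW').1 hx
    have := Finset.card_pos.2 ⟨x, hxs⟩
    omega
  | succ n ihn =>
    intro s hcard 𝒲 hW htouch
    by_cases hWe : ∀ W, W ∉ 𝒲
    · exact ⟨∅, by simp, fun W hW' => absurd hW' (hWe W)⟩
    push_neg at hWe
    obtain ⟨W₀, hW₀⟩ := hWe
    have hsne : s.Nonempty := by
      obtain ⟨x, hx⟩ := (hW W₀ hW₀).2.1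
      exact ⟨x, (hW W₀ hW₀).1 hx⟩
    by_cases hout : ∃ v ∈ s, ∀ W ∈ 𝒲, v ∉ W
    · obtain ⟨v, hvs, hv⟩ := hout
      refine ihn (s.erase v) ?_ 𝒲 ?_ htouch
      · have := Finset.card_erase_of_mem hvs
        omega
      · intro W hW'
        exact ⟨fun u hu => Finset.mem_erase.2
          ⟨fun h => hv W hW' (h ▸ hu), (hW W hW').1 hu⟩, (hW W hW').2⟩
    push_neg at hout
    obtain ⟨v, hvs, hsimp⟩ := dirac G hch s hsne
    by_cases hsing : ({v} : Finset V) ∈ 𝒲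
    · classical
      refine ⟨insert v (s.filter (fun u => G.Adj v u)), ?_, ?_⟩
      · intro p hp q hq hpq
        rcases Finset.mem_insert.1 hp with rfl | hp'
        · rcases Finset.mem_insert.1 hq with rfl | hq'
          · exact absurd rfl hpq
          · exact (Finset.mem_filter.1 hq').2
        · rcases Finset.mem_insert.1 hq with rfl | hq'
          · exact ((Finset.mem_filter.1 hp').2).symm
          · exact hsimp p (Finset.mem_filter.1 hp').1 q (Finset.mem_filter.1 hq').1
              (Finset.mem_filter.1 hp').2 (Finset.mem_filter.1 hq').2 hpq
      · intro W hW'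
        obtain ⟨u, hu, w, hw, huw⟩ := htouch {v} hsing W hW'
        rw [Finset.mem_singleton] at hu
        subst hu
        rcases huw with rfl | hadj
        · exact ⟨u, Finset.mem_inter.2 ⟨Finset.mem_insert_self _ _, hw⟩⟩
        · exact ⟨w, Finset.mem_inter.2 ⟨Finset.mem_insert_of_mem
            (Finset.mem_filter.2 ⟨(hW W hW').1 hw, hadj⟩), hw⟩⟩
    · -- erase v from everything
      have herase_ne : ∀ W ∈ 𝒲, v ∈ W → (W.erase v).Nonempty := by
        intro W hW' hvW
        rcases Finset.eq_empty_or_nonempty (W.erase v) with he | hne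
        · exfalso
          apply hsing
          have : W = {v} := by
            apply Finset.eq_singleton_iff_unique_mem.2
            refine ⟨hvW, fun u hu => ?_⟩
            by_contra hne'
            exact (Finset.eq_empty_iff_forall_notMem.1 he) u
              (Finset.mem_erase.2 ⟨hne', hu⟩)
          rwa [← this]
        · exact hne
      have hconn' : ∀ W ∈ 𝒲, conn G (W.erase v) := by
        intro W hW'
        by_cases hvW : v ∈ W
        · refine conn_erase_simplicial (hW W hW').2 ?_ (herase_ne W hW' hvW)
          intro a' ha' b' hb' h1 h2 hne'
          exact hsimp a' ((hW W hW').1 ha') b' ((hW W hW').1 hb') h1 h2 hne'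
        · rw [Finset.erase_eq_of_notMem hvW]
          exact (hW W hW').2
      have hnbrW : ∀ W ∈ 𝒲, v ∈ W → ∃ u ∈ W.erase v, G.Adj v u := by
        intro W hW' hvW
        exact exists_nbr (hW W hW').2 hvW (herase_ne W hW' hvW)
      set 𝒲' : Set (Finset V) := (fun W => W.erase v) '' 𝒲 with h𝒲'
      have hmain := ihn (s.erase v) (by have := Finset.card_erase_of_mem hvs; omega) 𝒲'
        (by
          rintro W' ⟨W, hW', rfl⟩
          refine ⟨?_, hconn' W hW'⟩
          intro u hu
          rw [Finset.mem_erase] at hu ⊢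
          exact ⟨hu.1, (hW W hW').1 hu.2⟩)
        (by
          rintro W1' ⟨W1, hW1, rfl⟩ W2' ⟨W2, hW2, rfl⟩
          obtain ⟨u, hu, w, hw, huw⟩ := htouch W1 hW1 W2 hW2
          by_cases huv : u = v
          · subst huv
            obtain ⟨u', hu', hadju'⟩ := hnbrW W1 hW1 hu
            by_cases hwv : w = u
            · subst hwv
              obtain ⟨w', hw', hadjw'⟩ := hnbrW W2 hW2 hw
              refine ⟨u', hu', w', hw', ?_⟩
              by_cases heq : u' = w'
              · exact Or.inl heq
              · exact Or.inr (hsimp u' ((hW W1 hW1).1 (Finset.mem_of_mem_erase hu'))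
                  w' ((hW W2 hW2).1 (Finset.mem_of_mem_erase hw')) hadju' hadjw' heq)
            · have hadjvw : G.Adj u w := by
                rcases huw with heq | hadj
                · exact absurd heq.symm hwv
                · exact hadj
              refine ⟨u', hu', w, Finset.mem_erase.2 ⟨hwv, hw⟩, ?_⟩
              by_cases heq : u' = w
              · exact Or.inl heq
              · exact Or.inr (hsimp u' ((hW W1 hW1).1 (Finset.mem_of_mem_erase hu'))
                  w ((hW W2 hW2).1 hw) hadju' hadjvw heq)
          · by_cases hwv : w = v
            · subst hwv
              have hadjuv : G.Adj u w := by
                rcases huw with heq | hadj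
                · exact absurd heq huv
                · exact hadj
              obtain ⟨w', hw', hadjw'⟩ := hnbrW W2 hW2 hw
              refine ⟨u, Finset.mem_erase.2 ⟨huv, hu⟩, w', hw', ?_⟩
              by_cases heq : u = w'
              · exact Or.inl heq
              · exact Or.inr (hsimp u ((hW W1 hW1).1 hu)
                  w' ((hW W2 hW2).1 (Finset.mem_of_mem_erase hw')) hadjuv.symm hadjw' heq)
            · exact ⟨u, Finset.mem_erase.2 ⟨huv, hu⟩, w, Finset.mem_erase.2 ⟨hwv, hw⟩, huw⟩)
      obtain ⟨K, hKclq, hKmeet⟩ := hmain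
      refine ⟨K, hKclq, fun W hW' => ?_⟩
      obtain ⟨u, hu⟩ := hKmeet (W.erase v) ⟨W, hW', rfl⟩
      rw [Finset.mem_inter] at hu
      exact ⟨u, Finset.mem_inter.2 ⟨hu.1, Finset.mem_of_mem_erase hu.2⟩⟩

def Circ (G : SimpleGraph V) (U : Finset V) (r : ℕ) : Set (Finset V) :=
  {W | W ⊆ U ∧ W.card = r ∧ conn G W}

def GapFreeOn (G : SimpleGraph V) (U : Finset V) (r : ℕ) : Prop :=
  ¬ ∃ E₁ E₂ : Finset V, E₁ ∈ Circ G U r ∧ E₂ ∈ Circ G U r ∧ Disjoint E₁ E₂ ∧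
      ∀ W ∈ Circ G U r, W ⊆ E₁ ∪ E₂ → W = E₁ ∨ W = E₂

lemma GapFreeOn.mono {G : SimpleGraph V} {U U' : Finset V} {r : ℕ}
    (h : GapFreeOn G U r) (hsub : U' ⊆ U) : GapFreeOn G U' r := by
  rintro ⟨E1, E2, h1, h2, hd, hw⟩
  refine h ⟨E1, E2, ⟨h1.1.trans hsub, h1.2⟩, ⟨h2.1.trans hsub, h2.2⟩, hd, ?_⟩
  intro W hW hWsub
  refine hw W ⟨hWsub.trans (Finset.union_subset h1.1 h2.1), hW.2⟩ hWsub

lemma circ_touch {G : SimpleGraph V} {U : Finset V} {r : ℕ} (hgf : GapFreeOn G U r)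
    {E1 E2 : Finset V} (h1 : E1 ∈ Circ G U r) (h2 : E2 ∈ Circ G U r)
    (hd : Disjoint E1 E2) : ∃ u ∈ E1, ∃ w ∈ E2, G.Adj u w := by
  by_contra hcon
  push_neg at hcon
  apply hgf
  refine ⟨E1, E2, h1, h2, hd, ?_⟩
  intro W hW hWsub
  by_cases hW1 : (W ∩ E1).Nonempty
  · by_cases hW2 : (W ∩ E2).Nonempty
    · exfalso
      have hWeq : W = (W ∩ E1) ∪ (W ∩ E2) := by
        ext u
        rw [Finset.mem_union, Finset.mem_inter, Finset.mem_inter]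
        constructor
        · intro hu
          rcases Finset.mem_union.1 (hWsub hu) with h | h
          · exact Or.inl ⟨hu, h⟩
          · exact Or.inr ⟨hu, h⟩
        · rintro (⟨hu, _⟩ | ⟨hu, _⟩) <;> exact hu
      have hc : conn G ((W ∩ E1) ∪ (W ∩ E2)) := hWeq ▸ hW.2.2
      have hdisj : Disjoint (W ∩ E1) (W ∩ E2) :=
        Finset.disjoint_left.2 fun u hu1 hu2 =>
          (Finset.disjoint_left.1 hd) (Finset.mem_inter.1 hu1).2 (Finset.mem_inter.1 hu2).2
      obtain ⟨u, hu, w, hw, hadj⟩ := crossing_edge hc hdisj hW1 hW2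
      exact hcon u (Finset.mem_inter.1 hu).2 w (Finset.mem_inter.1 hw).2 hadj
    · left
      have hsub : W ⊆ E1 := by
        intro u hu
        rcases Finset.mem_union.1 (hWsub hu) with h | h
        · exact h
        · exact absurd ⟨u, Finset.mem_inter.2 ⟨hu, h⟩⟩ hW2
      exact Finset.eq_of_subset_of_card_le hsub (by rw [hW.2.1, h1.2.1])
  · right
    have hsub : W ⊆ E2 := by
      intro u hu
      rcases Finset.mem_union.1 (hWsub hu) with h | h
      · exact absurd ⟨u, Finset.mem_inter.2 ⟨hu, h⟩⟩ hW1
      · exact h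
    exact Finset.eq_of_subset_of_card_le hsub (by rw [hW.2.1, h2.2.1])

lemma lemmaA {G : SimpleGraph V} (hch : Chordal G) {U : Finset V} {r : ℕ}
    (hgf : GapFreeOn G U r) {F0 : Finset V} (hF0 : F0 ∈ Circ G U r) :
    ∃ x ∈ U, ∀ F ∈ Circ G U r, ∃ w ∈ F, w = x ∨ G.Adj x w := by
  obtain ⟨v0, hv0⟩ := hF0.2.2.1
  have hv0U : v0 ∈ U := hF0.1 hv0
  set C := CComp G U v0 with hC
  have hF0C : F0 ⊆ C := conn_subset_CComp hF0.2.2 hF0.1 hv0 (self_mem_CComp hv0U)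
  have hallC : ∀ F ∈ Circ G U r, F ⊆ C := by
    intro F hF
    by_cases hFC : (F ∩ C).Nonempty
    · obtain ⟨x, hx⟩ := hFC
      rw [Finset.mem_inter] at hx
      exact conn_subset_CComp hF.2.2 hF.1 hx.1 hx.2
    · exfalso
      have hd : Disjoint F F0 := Finset.disjoint_left.2 fun u huF huF0 =>
        hFC ⟨u, Finset.mem_inter.2 ⟨huF, hF0C huF0⟩⟩
      obtain ⟨u, hu, w, hw, hadj⟩ := circ_touch hgf hF hF0 hd
      exact hFC ⟨u, Finset.mem_inter.2 ⟨hu,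
        adj_mem_CComp (hF0C hw) (hF.1 hu) hadj.symm⟩⟩
  obtain ⟨K, hKclq, hKmeet⟩ := helly G hch C.card C le_rfl (Circ G U r)
    (fun W hW => ⟨hallC W hW, hW.2.2⟩)
    (by
      intro W hW W' hW'
      by_cases hd : Disjoint W W'
      · obtain ⟨u, hu, w, hw, hadj⟩ := circ_touch hgf hW hW' hd
        exact ⟨u, hu, w, hw, Or.inr hadj⟩
      · rw [Finset.not_disjoint_iff] at hd
        obtain ⟨u, hu1, hu2⟩ := hd
        exact ⟨u, hu1, u, hu2, Or.inl rfl⟩)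
  obtain ⟨x, hx⟩ := hKmeet F0 hF0
  rw [Finset.mem_inter] at hx
  refine ⟨x, hF0.1 hx.2, ?_⟩
  intro F hF
  obtain ⟨w, hw⟩ := hKmeet F hF
  rw [Finset.mem_inter] at hw
  by_cases hwx : w = x
  · exact ⟨w, hw.2, Or.inl hwx⟩
  · exact ⟨w, hw.2, Or.inr (hKclq x hx.1 w hw.1 (fun h => hwx h.symm))⟩

/-! ## bridge -/

lemma connOn_iff {G : SimpleGraph V} {s : Finset V} : ConnOn G s ↔ conn G s := by
  constructor
  · intro h
    have h' : (G.induce (s : Set V)).Connected := h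
    have hpre := h'.preconnected
    have hne := h'.nonempty
    obtain ⟨⟨x0, hx0⟩⟩ := hne
    refine ⟨⟨x0, by simpa using hx0⟩, ?_⟩
    intro a ha b hb
    have hreach := hpre ⟨a, by simpa using ha⟩ ⟨b, by simpa using hb⟩
    obtain ⟨p⟩ := hreach
    have key : ∀ (u w : (s : Set V)), (G.induce (s : Set V)).Walk u w →
        Reach G s u.1 w.1 := by
      intro u w p
      induction p with
      | nil => exact Relation.ReflTransGen.refl
      | @cons u' v' w' h q ih =>
        exact Relation.ReflTransGen.head
          ⟨Finset.mem_coe.mp u'.2, Finset.mem_coe.mp v'.2, h⟩ ih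
    exact key _ _ p
  · rintro ⟨⟨x0, hx0⟩, hcon⟩
    have key : ∀ a b : V, Reach G s a b → ∀ (ha : a ∈ s) (hb : b ∈ s),
        (G.induce (s : Set V)).Reachable ⟨a, by simpa using ha⟩ ⟨b, by simpa using hb⟩ := by
      intro a b h
      induction h with
      | refl => intro ha hb; rfl
      | @tail u w hru hstep ih =>
        intro ha hb
        have h1 := ih ha hstep.1
        have h2 : (G.induce (s : Set V)).Adj ⟨u, by simpa using hstep.1⟩
            ⟨w, by simpa using hstep.2.1⟩ := hstep.2.2
        exact h1.trans h2.reachable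
    show (G.induce (s : Set V)).Connected
    haveI : Nonempty ((s : Set V) : Type _) := ⟨⟨x0, by simpa using hx0⟩⟩
    apply SimpleGraph.Connected.mk
    rintro ⟨u, hu⟩ ⟨w, hw⟩
    have hu' : u ∈ s := by simpa using hu
    have hw' : w ∈ s := by simpa using hw
    exact key u w (hcon hu' hw') hu' hw'

lemma mem_Supp_iff {G : SimpleGraph V} {U A : Finset V} {r : ℕ} {F : Finset V} :
    F ∈ Supp G U A r ↔ F ⊆ U ∧ F.card = r ∧ F ∩ A = ∅ ∧ conn G (F ∪ A) := by
  unfold Supp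
  rw [Set.mem_setOf_eq, connOn_iff]

lemma supp_empty_iff_circ {G : SimpleGraph V} {U : Finset V} {r : ℕ} {F : Finset V} :
    F ∈ Supp G U ∅ r ↔ F ∈ Circ G U r := by
  rw [mem_Supp_iff]
  unfold Circ
  rw [Set.mem_setOf_eq, Finset.union_empty]
  constructor
  · rintro ⟨h1, h2, _, h4⟩; exact ⟨h1, h2, h4⟩
  · rintro ⟨h1, h2, h4⟩; exact ⟨h1, h2, Finset.inter_empty F, h4⟩

/-! ## complex-level lemmas -/

lemma sigmaC_of_no_supp {G : SimpleGraph V} {U A : Finset V} {r : ℕ}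
    (h : ∀ F, F ∉ Supp G U A r) : SigmaC G U A r = ∅ := by
  apply Set.eq_empty_iff_forall_notMem.2
  rintro H ⟨F, hF, _⟩
  exact h F hF

lemma sigmaC_zero {G : SimpleGraph V} {U A : Finset V} (hdisj : Disjoint A U)
    (hA : conn G A) : SigmaC G U A 0 = {t : Finset V | t ⊆ U} := by
  ext H
  simp only [SigmaC, Set.mem_setOf_eq]
  constructor
  · rintro ⟨F, _, hH⟩
    exact hH.trans ((Finset.sdiff_subset).trans (Finset.sdiff_subset))
  · intro hH
    refine ⟨∅, mem_Supp_iff.2 ⟨Finset.empty_subset U, Finset.card_empty,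
      Finset.empty_inter A, by rwa [Finset.empty_union]⟩, ?_⟩
    intro u hu
    rw [Finset.sdiff_empty, Finset.mem_sdiff]
    exact ⟨hH hu, fun hA' => (Finset.disjoint_left.1 hdisj) hA' (hH hu)⟩

lemma linkC_sigmaC {G : SimpleGraph V} {U A : Finset V} {r : ℕ} {x : V}
    (hxU : x ∈ U) (hxA : x ∉ A) :
    linkC (SigmaC G U A r) x = SigmaC G (U.erase x) A r := by
  ext H
  constructor
  · rintro ⟨_, hxH, F', hF', hins⟩
    have hxF' : x ∉ F' := by
      have := hins (Finset.mem_insert_self x H)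
      rw [Finset.mem_sdiff, Finset.mem_sdiff] at this
      exact this.1.2
    refine ⟨F', mem_Supp_iff.2 ?_, ?_⟩
    · have h0 := mem_Supp_iff.1 hF'
      exact ⟨fun u hu => Finset.mem_erase.2 ⟨fun h => hxF' (h ▸ hu), h0.1 hu⟩,
        h0.2.1, h0.2.2.1, h0.2.2.2⟩
    · intro u hu
      have h1 := hins (Finset.mem_insert_of_mem hu)
      rw [Finset.mem_sdiff, Finset.mem_sdiff] at h1
      rw [Finset.mem_sdiff, Finset.mem_sdiff, Finset.mem_erase]
      exact ⟨⟨⟨fun h => hxH (h ▸ hu), h1.1.1⟩, h1.1.2⟩, h1.2⟩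
  · rintro ⟨F₁, hF₁, hsub⟩
    have h0 := mem_Supp_iff.1 hF₁
    have hF₁U : F₁ ⊆ U := h0.1.trans (Finset.erase_subset x U)
    have hxF₁ : x ∉ F₁ := fun h => (Finset.mem_erase.1 (h0.1 h)).1 rfl
    have hF₁' : F₁ ∈ Supp G U A r := mem_Supp_iff.2 ⟨hF₁U, h0.2.1, h0.2.2.1, h0.2.2.2⟩
    have hxH : x ∉ H := by
      intro h
      have := hsub h
      rw [Finset.mem_sdiff, Finset.mem_sdiff, Finset.mem_erase] at this
      exact this.1.1.1 rfl
    have hHsub : H ⊆ (U \ F₁) \ A := by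
      intro u hu
      have h1 := hsub hu
      rw [Finset.mem_sdiff, Finset.mem_sdiff, Finset.mem_erase] at h1
      rw [Finset.mem_sdiff, Finset.mem_sdiff]
      exact ⟨⟨h1.1.1.2, h1.1.2⟩, h1.2⟩
    refine ⟨⟨F₁, hF₁', hHsub⟩, hxH, ⟨F₁, hF₁', ?_⟩⟩
    intro u hu
    rcases Finset.mem_insert.1 hu with rfl | hu'
    · rw [Finset.mem_sdiff, Finset.mem_sdiff]
      exact ⟨⟨hxU, hxF₁⟩, hxA⟩
    · exact hHsub hu'

lemma supp_erase_mem {G : SimpleGraph V} {U A : Finset V} {r : ℕ} {x : V}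
    (hxA : x ∉ A) {F : Finset V} (hF : F ∈ Supp G U A (r + 1)) (hxF : x ∈ F) :
    F.erase x ∈ Supp G (U.erase x) (insert x A) r := by
  obtain ⟨h1, h2, h3, h4⟩ := mem_Supp_iff.1 hF
  refine mem_Supp_iff.2 ⟨?_, ?_, ?_, ?_⟩
  · intro u hu
    rw [Finset.mem_erase] at hu ⊢
    exact ⟨hu.1, h1 hu.2⟩
  · rw [Finset.card_erase_of_mem hxF, h2]
    omega
  · apply Finset.eq_empty_iff_forall_notMem.2
    intro u hu
    rw [Finset.mem_inter, Finset.mem_erase, Finset.mem_insert] at hu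
    rcases hu.2 with rfl | huA
    · exact hu.1.1 rfl
    · exact (Finset.eq_empty_iff_forall_notMem.1 h3) u
        (Finset.mem_inter.2 ⟨hu.1.2, huA⟩)
  · have hset : F.erase x ∪ insert x A = F ∪ A := by
      ext u
      simp only [Finset.mem_union, Finset.mem_erase, Finset.mem_insert]
      constructor
      · rintro (⟨_, h⟩ | (rfl | h))
        · exact Or.inl h
        · exact Or.inl hxF
        · exact Or.inr h
      · rintro (h | h)
        · by_cases hux : u = x
          · exact Or.inr (Or.inl hux)
          · exact Or.inl ⟨hux, h⟩
        · exact Or.inr (Or.inr h)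
    rwa [hset]

lemma supp_insert_mem {G : SimpleGraph V} {U A : Finset V} {r : ℕ} {x : V}
    (hxU : x ∈ U) (hxA : x ∉ A) {F₁ : Finset V}
    (hF₁ : F₁ ∈ Supp G (U.erase x) (insert x A) r) :
    insert x F₁ ∈ Supp G U A (r + 1) ∧ x ∉ F₁ := by
  obtain ⟨h1, h2, h3, h4⟩ := mem_Supp_iff.1 hF₁
  have hxF₁ : x ∉ F₁ := by
    intro h
    exact (Finset.eq_empty_iff_forall_notMem.1 h3) x
      (Finset.mem_inter.2 ⟨h, Finset.mem_insert_self x A⟩)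
  refine ⟨mem_Supp_iff.2 ⟨?_, ?_, ?_, ?_⟩, hxF₁⟩
  · exact Finset.insert_subset hxU (h1.trans (Finset.erase_subset x U))
  · rw [Finset.card_insert_of_notMem hxF₁, h2]
  · apply Finset.eq_empty_iff_forall_notMem.2
    intro u hu
    rw [Finset.mem_inter, Finset.mem_insert] at hu
    rcases hu.1 with rfl | huF₁
    · exact hxA hu.2
    · exact (Finset.eq_empty_iff_forall_notMem.1 h3) u
        (Finset.mem_inter.2 ⟨huF₁, Finset.mem_insert_of_mem hu.2⟩)
  · have hset : insert x F₁ ∪ A = F₁ ∪ insert x A := by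
      rw [Finset.insert_union, Finset.union_insert]
    rwa [hset]

lemma face_sub_of_erase {U A : Finset V} {x : V} {H F₁ : Finset V}
    (hsub : H ⊆ ((U.erase x) \ F₁) \ insert x A) :
    H ⊆ (U \ insert x F₁) \ A := by
  intro u hu
  have h1 := hsub hu
  rw [Finset.mem_sdiff, Finset.mem_sdiff, Finset.mem_erase, Finset.mem_insert] at h1
  push_neg at h1
  rw [Finset.mem_sdiff, Finset.mem_sdiff, Finset.mem_insert]
  push_neg
  exact ⟨⟨h1.1.1.2, h1.2.1, h1.1.2⟩, h1.2.2⟩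

lemma face_sub_to_erase {U A : Finset V} {x : V} {H F : Finset V} (hxF : x ∈ F)
    (hsub : H ⊆ (U \ F) \ A) (hxH : x ∉ H) :
    H ⊆ ((U.erase x) \ F.erase x) \ insert x A := by
  intro u hu
  have h1 := hsub hu
  rw [Finset.mem_sdiff, Finset.mem_sdiff] at h1
  have hux : u ≠ x := fun h => hxH (h ▸ hu)
  rw [Finset.mem_sdiff, Finset.mem_sdiff, Finset.mem_erase, Finset.mem_erase,
    Finset.mem_insert]
  push_neg
  exact ⟨⟨⟨hux, h1.1.1⟩, fun _ => h1.1.2⟩, hux, h1.2⟩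

lemma delC_sigmaC {G : SimpleGraph V} {U A : Finset V} {r : ℕ} {x : V}
    (hxU : x ∈ U) (hxA : x ∉ A)
    (hSH : ∀ F ∈ Supp G U A (r + 1), x ∉ F →
      ∃ F' ∈ Supp G U A (r + 1), x ∈ F' ∧ F' ⊆ insert x F) :
    delC (SigmaC G U A (r + 1)) x = SigmaC G (U.erase x) (insert x A) r := by
  ext H
  constructor
  · rintro ⟨⟨F, hF, hsub⟩, hxH⟩
    obtain ⟨Fx, hFx, hxFx, hsubx⟩ : ∃ Fx ∈ Supp G U A (r + 1), x ∈ Fx ∧ H ⊆ (U \ Fx) \ A := by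
      by_cases hxF : x ∈ F
      · exact ⟨F, hF, hxF, hsub⟩
      · obtain ⟨F', hF', hxF', hF'sub⟩ := hSH F hF hxF
        refine ⟨F', hF', hxF', ?_⟩
        intro u hu
        have h1 := hsub hu
        rw [Finset.mem_sdiff, Finset.mem_sdiff] at h1 ⊢
        refine ⟨⟨h1.1.1, fun huF' => ?_⟩, h1.2⟩
        rcases Finset.mem_insert.1 (hF'sub huF') with rfl | h
        · exact hxH hu
        · exact h1.1.2 h
    exact ⟨Fx.erase x, supp_erase_mem hxA hFx hxFx, face_sub_to_erase hxFx hsubx hxH⟩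
  · rintro ⟨F₁, hF₁, hsub⟩
    obtain ⟨hins, hxF₁⟩ := supp_insert_mem hxU hxA hF₁
    have hxH : x ∉ H := by
      intro h
      have := hsub h
      rw [Finset.mem_sdiff, Finset.mem_sdiff, Finset.mem_erase] at this
      exact this.1.1.1 rfl
    exact ⟨⟨insert x F₁, hins, face_sub_of_erase hsub⟩, hxH⟩

lemma sigmaC_all_mem {G : SimpleGraph V} {U A : Finset V} {r : ℕ} {x : V}
    (hxU : x ∈ U) (hxA : x ∉ A)
    (hall : ∀ F ∈ Supp G U A (r + 1), x ∈ F) :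
    SigmaC G U A (r + 1) = SigmaC G (U.erase x) (insert x A) r := by
  ext H
  constructor
  · rintro ⟨F, hF, hsub⟩
    have hxF := hall F hF
    have hxH : x ∉ H := by
      intro h
      have := hsub h
      rw [Finset.mem_sdiff, Finset.mem_sdiff] at this
      exact this.1.2 hxF
    exact ⟨F.erase x, supp_erase_mem hxA hF hxF, face_sub_to_erase hxF hsub hxH⟩
  · rintro ⟨F₁, hF₁, hsub⟩
    obtain ⟨hins, _⟩ := supp_insert_mem hxU hxA hF₁
    exact ⟨insert x F₁, hins, face_sub_of_erase hsub⟩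

lemma card_face {U A F : Finset V} (hFU : F ⊆ U) (hFA : F ∩ A = ∅) :
    ((U \ F) \ A).card = (U \ A).card - F.card := by
  rw [sdiff_sdiff_comm, Finset.card_sdiff_of_subset]
  intro u hu
  rw [Finset.mem_sdiff]
  exact ⟨hFU hu, fun hA => (Finset.eq_empty_iff_forall_notMem.1 hFA) u
    (Finset.mem_inter.2 ⟨hu, hA⟩)⟩

lemma shedding_sigmaC {G : SimpleGraph V} {U A : Finset V} {r : ℕ} {x : V}
    (hSH : ∀ F ∈ Supp G U A r, x ∉ F →
      ∃ F' ∈ Supp G U A r, x ∈ F' ∧ F' ⊆ insert x F) :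
    IsShedding (SigmaC G U A r) x := by
  intro K hK
  obtain ⟨⟨F, hF, hsub⟩, hxK⟩ := hK.1
  obtain ⟨Fx, hFx, hxFx, hsubx⟩ : ∃ Fx ∈ Supp G U A r, x ∈ Fx ∧ K ⊆ (U \ Fx) \ A := by
    by_cases hxF : x ∈ F
    · exact ⟨F, hF, hxF, hsub⟩
    · obtain ⟨F', hF', hxF', hF'sub⟩ := hSH F hF hxF
      refine ⟨F', hF', hxF', ?_⟩
      intro u hu
      have h1 := hsub hu
      rw [Finset.mem_sdiff, Finset.mem_sdiff] at h1 ⊢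
      refine ⟨⟨h1.1.1, fun huF' => ?_⟩, h1.2⟩
      rcases Finset.mem_insert.1 (hF'sub huF') with rfl | h
      · exact hxK hu
      · exact h1.1.2 h
  have hK0mem : ((U \ Fx) \ A) ∈ delC (SigmaC G U A r) x := by
    refine ⟨⟨Fx, hFx, Finset.Subset.refl _⟩, ?_⟩
    intro h
    rw [Finset.mem_sdiff, Finset.mem_sdiff] at h
    exact h.1.2 hxFx
  have hKeq : K = (U \ Fx) \ A := hK.2 _ hK0mem hsubx
  refine ⟨hK.1.1, ?_⟩
  intro H hH hKH
  obtain ⟨F'', hF'', hsub''⟩ := hH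
  have hcard1 : ((U \ Fx) \ A).card = (U \ A).card - r := by
    have h0 := mem_Supp_iff.1 hFx
    rw [card_face h0.1 h0.2.2.1, h0.2.1]
  have hcard2 : ((U \ F'') \ A).card = (U \ A).card - r := by
    have h0 := mem_Supp_iff.1 hF''
    rw [card_face h0.1 h0.2.2.1, h0.2.1]
  apply Finset.eq_of_subset_of_card_le hKH
  calc H.card ≤ ((U \ F'') \ A).card := Finset.card_le_card hsub''
    _ = K.card := by rw [hcard2, hKeq, hcard1]

lemma singleton_mem_sigmaC {G : SimpleGraph V} {U A : Finset V} {r : ℕ} {x : V}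
    (hxU : x ∈ U) (hxA : x ∉ A) {F₁ : Finset V} (hF₁ : F₁ ∈ Supp G U A r)
    (hxF₁ : x ∉ F₁) : ({x} : Finset V) ∈ SigmaC G U A r := by
  refine ⟨F₁, hF₁, ?_⟩
  intro u hu
  rw [Finset.mem_singleton] at hu
  subst hu
  rw [Finset.mem_sdiff, Finset.mem_sdiff]
  exact ⟨⟨hxU, hxF₁⟩, hxA⟩

lemma SH_of_nbr {G : SimpleGraph V} {U A : Finset V} {r : ℕ} {x p : V}
    (hxU : x ∈ U) (hxA : x ∉ A) (hA : conn G A) (hp : p ∈ A) (hadj : G.Adj x p) :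
    ∀ F ∈ Supp G U A (r + 1), x ∉ F →
      ∃ F' ∈ Supp G U A (r + 1), x ∈ F' ∧ F' ⊆ insert x F := by
  intro F hF hxF
  obtain ⟨hFU, hFcard, hFA, hFconn⟩ := mem_Supp_iff.1 hF
  have hFA' : ∀ u ∈ F, u ∉ A := fun u hu hA' =>
    (Finset.eq_empty_iff_forall_notMem.1 hFA) u (Finset.mem_inter.2 ⟨hu, hA'⟩)
  have hTconn : conn G (insert x A) := conn_insert hA hp hadj
  have hsconn : conn G (insert x (F ∪ A)) :=
    conn_insert hFconn (Finset.mem_union_right F hp) hadj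
  have hTs : insert x A ⊆ insert x (F ∪ A) :=
    Finset.insert_subset_insert x (Finset.subset_union_right)
  have hFne : F.Nonempty := Finset.card_pos.1 (by omega)
  obtain ⟨y, hy⟩ := hFne
  have hne : ∃ z ∈ insert x (F ∪ A), z ∉ insert x A := by
    refine ⟨y, Finset.mem_insert_of_mem (Finset.mem_union_left A hy), ?_⟩
    intro h
    rcases Finset.mem_insert.1 h with rfl | h'
    · exact hxF hy
    · exact hFA' y hy h'
  obtain ⟨f, hfs, hfT, hconn'⟩ := prune hTs hTconn hsconn hne
  have hfF : f ∈ F := by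
    rcases Finset.mem_insert.1 hfs with rfl | h'
    · exact absurd (Finset.mem_insert_self f A) hfT
    · rcases Finset.mem_union.1 h' with h | h
      · exact h
      · exact absurd (Finset.mem_insert_of_mem h) hfT
  have hfx : f ≠ x := fun h => hxF (h ▸ hfF)
  have hfA : f ∉ A := hFA' f hfF
  refine ⟨insert x (F.erase f), mem_Supp_iff.2 ⟨?_, ?_, ?_, ?_⟩,
    Finset.mem_insert_self x _, Finset.insert_subset_insert x (Finset.erase_subset f F)⟩
  · exact Finset.insert_subset hxU ((Finset.erase_subset f F).trans hFU)
  · rw [Finset.card_insert_of_notMem (fun h => hxF (Finset.mem_of_mem_erase h)),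
      Finset.card_erase_of_mem hfF, hFcard]
    omega
  · apply Finset.eq_empty_iff_forall_notMem.2
    intro u hu
    rw [Finset.mem_inter, Finset.mem_insert] at hu
    rcases hu.1 with rfl | h
    · exact hxA hu.2
    · exact hFA' u (Finset.mem_of_mem_erase h) hu.2
  · have hset : insert x (F.erase f) ∪ A = (insert x (F ∪ A)).erase f := by
      ext u
      simp only [Finset.mem_union, Finset.mem_insert, Finset.mem_erase]
      constructor
      · rintro ((rfl | ⟨hne', hF'⟩) | hA')
        · exact ⟨fun h => hfx h.symm, Or.inl rfl⟩
        · exact ⟨hne', Or.inr (Or.inl hF')⟩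
        · exact ⟨fun h => hfA (h ▸ hA'), Or.inr (Or.inr hA')⟩
      · rintro ⟨hne', (rfl | hF' | hA')⟩
        · exact Or.inl (Or.inl rfl)
        · exact Or.inl (Or.inr ⟨hne', hF'⟩)
        · exact Or.inr hA'
    rw [hset]
    exact hconn'

lemma SH_of_meet {G : SimpleGraph V} {U : Finset V} {r : ℕ} {x : V} (hxU : x ∈ U) :
    ∀ F ∈ Supp G U (∅ : Finset V) (r + 1), x ∉ F → (∃ w ∈ F, G.Adj x w) →
      ∃ F' ∈ Supp G U (∅ : Finset V) (r + 1), x ∈ F' ∧ F' ⊆ insert x F := by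
  intro F hF hxF hmeet
  obtain ⟨w, hwF, hadj⟩ := hmeet
  obtain ⟨hFU, hFcard, _, hFconn⟩ := mem_Supp_iff.1 hF
  rw [Finset.union_empty] at hFconn
  have hsconn : conn G (insert x F) := conn_insert hFconn hwF hadj
  have hTs : ({x} : Finset V) ⊆ insert x F := Finset.singleton_subset_iff.2
    (Finset.mem_insert_self x F)
  have hFne : F.Nonempty := Finset.card_pos.1 (by omega)
  obtain ⟨y, hy⟩ := hFne
  have hne : ∃ z ∈ insert x F, z ∉ ({x} : Finset V) := by
    refine ⟨y, Finset.mem_insert_of_mem hy, ?_⟩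
    rw [Finset.mem_singleton]
    rintro rfl
    exact hxF hy
  obtain ⟨f, hfs, hfT, hconn'⟩ := prune hTs (conn_singleton G x) hsconn hne
  rw [Finset.mem_singleton] at hfT
  have hfF : f ∈ F := by
    rcases Finset.mem_insert.1 hfs with rfl | h'
    · exact absurd rfl hfT
    · exact h'
  refine ⟨insert x (F.erase f), mem_Supp_iff.2 ⟨?_, ?_, Finset.inter_empty _, ?_⟩,
    Finset.mem_insert_self x _, Finset.insert_subset_insert x (Finset.erase_subset f F)⟩
  · exact Finset.insert_subset hxU ((Finset.erase_subset f F).trans hFU)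
  · rw [Finset.card_insert_of_notMem (fun h => hxF (Finset.mem_of_mem_erase h)),
      Finset.card_erase_of_mem hfF, hFcard]
    omega
  · rw [Finset.union_empty]
    have hset : insert x (F.erase f) = (insert x F).erase f := by
      ext u
      simp only [Finset.mem_insert, Finset.mem_erase]
      constructor
      · rintro (rfl | ⟨hne', hF'⟩)
        · exact ⟨fun h => hfT h.symm, Or.inl rfl⟩
        · exact ⟨hne', Or.inr hF'⟩
      · rintro ⟨hne', (rfl | hF')⟩
        · exact Or.inl rfl
        · exact Or.inr ⟨hne', hF'⟩
    rw [hset]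
    exact hconn'

lemma rooted_vd (G : SimpleGraph V) :
    ∀ N : ℕ, ∀ U A : Finset V, ∀ r : ℕ, U.card ≤ N → Disjoint A U → conn G A →
      VD (SigmaC G U A r) := by
  intro N
  induction N with
  | zero =>
    intro U A r hU hdisj hA
    have hU0 : U = ∅ := Finset.card_eq_zero.1 (by omega)
    subst hU0
    cases r with
    | zero =>
      rw [sigmaC_zero hdisj hA]
      exact VD.simplex ∅
    | succ r =>
      rw [sigmaC_of_no_supp (fun F hF => by
        obtain ⟨h1, h2, _, _⟩ := mem_Supp_iff.1 hF
        have h3 := Finset.card_le_card h1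
        rw [Finset.card_empty] at h3
        omega)]
      exact VD.void
  | succ N ih =>
    intro U A r hU hdisj hA
    cases r with
    | zero =>
      rw [sigmaC_zero hdisj hA]
      exact VD.simplex U
    | succ r =>
      by_cases hSup : ∃ F, F ∈ Supp G U A (r + 1)
      · obtain ⟨F0, hF0⟩ := hSup
        obtain ⟨hF0U, hF0card, hF0A, hF0conn⟩ := mem_Supp_iff.1 hF0
        have hF0ne : F0.Nonempty := Finset.card_pos.1 (by omega)
        have hd : Disjoint F0 A := Finset.disjoint_left.2 fun u hu1 hu2 =>
          (Finset.eq_empty_iff_forall_notMem.1 hF0A) u (Finset.mem_inter.2 ⟨hu1, hu2⟩)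
        obtain ⟨x, hxF0, p, hp, hadj⟩ := crossing_edge hF0conn hd hF0ne hA.1
        have hxU : x ∈ U := hF0U hxF0
        have hxA : x ∉ A := Finset.disjoint_left.1 hd hxF0
        have hSH := SH_of_nbr (r := r) hxU hxA hA hp hadj
        have hdisj' : Disjoint (insert x A) (U.erase x) := by
          rw [Finset.disjoint_left]
          intro u hu hu'
          rcases Finset.mem_insert.1 hu with rfl | h
          · exact (Finset.mem_erase.1 hu').1 rfl
          · exact (Finset.disjoint_left.1 hdisj) h (Finset.mem_of_mem_erase hu')
        have hdisjA : Disjoint A (U.erase x) :=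
          hdisj.mono_right (Finset.erase_subset x U)
        have hcard' : (U.erase x).card ≤ N := by
          rw [Finset.card_erase_of_mem hxU]
          omega
        have hAx : conn G (insert x A) := conn_insert hA hp hadj
        by_cases hall : ∀ F ∈ Supp G U A (r + 1), x ∈ F
        · rw [sigmaC_all_mem hxU hxA hall]
          exact ih (U.erase x) (insert x A) r hcard' hdisj' hAx
        · push_neg at hall
          obtain ⟨F₁, hF₁, hxF₁⟩ := hall
          refine VD.step _ x (singleton_mem_sigmaC hxU hxA hF₁ hxF₁)
            (shedding_sigmaC hSH) ?_ ?_
          · rw [linkC_sigmaC hxU hxA]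
            exact ih (U.erase x) A (r + 1) hcard' hdisjA hA
          · rw [delC_sigmaC hxU hxA hSH]
            exact ih (U.erase x) (insert x A) r hcard' hdisj' hAx
      · push_neg at hSup
        rw [sigmaC_of_no_supp hSup]
        exact VD.void

lemma unrooted_vd (G : SimpleGraph V) (hch : Chordal G) :
    ∀ N : ℕ, ∀ U : Finset V, ∀ r : ℕ, U.card ≤ N → GapFreeOn G U (r + 1) →
      VD (SigmaC G U ∅ (r + 1)) := by
  intro N
  induction N with
  | zero =>
    intro U r hU hgf
    have hU0 : U = ∅ := Finset.card_eq_zero.1 (by omega)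
    subst hU0
    rw [sigmaC_of_no_supp (fun F hF => by
      obtain ⟨h1, h2, _, _⟩ := mem_Supp_iff.1 hF
      have h3 := Finset.card_le_card h1
      rw [Finset.card_empty] at h3
      omega)]
    exact VD.void
  | succ N ih =>
    intro U r hU hgf
    by_cases hSup : ∃ F, F ∈ Supp G U (∅ : Finset V) (r + 1)
    · obtain ⟨F0, hF0⟩ := hSup
      obtain ⟨x, hxU, hmeet⟩ := lemmaA hch hgf (supp_empty_iff_circ.1 hF0)
      have hSH : ∀ F ∈ Supp G U (∅ : Finset V) (r + 1), x ∉ F →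
          ∃ F' ∈ Supp G U (∅ : Finset V) (r + 1), x ∈ F' ∧ F' ⊆ insert x F := by
        intro F hF hxF
        obtain ⟨w, hwF, hwx⟩ := hmeet F (supp_empty_iff_circ.1 hF)
        rcases hwx with rfl | hadj
        · exact absurd hwF hxF
        · exact SH_of_meet hxU F hF hxF ⟨w, hwF, hadj⟩
      have hcard' : (U.erase x).card ≤ N := by
        rw [Finset.card_erase_of_mem hxU]
        omega
      have hxe : ({x} : Finset V) = insert x (∅ : Finset V) := rfl
      have hdx : Disjoint (insert x (∅ : Finset V)) (U.erase x) := by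
        rw [← hxe]
        exact Finset.disjoint_singleton_left.2 (fun h => (Finset.mem_erase.1 h).1 rfl)
      have hcx : conn G (insert x (∅ : Finset V)) := by
        rw [← hxe]
        exact conn_singleton G x
      by_cases hall : ∀ F ∈ Supp G U (∅ : Finset V) (r + 1), x ∈ F
      · rw [sigmaC_all_mem hxU (Finset.notMem_empty x) hall]
        exact rooted_vd G N (U.erase x) (insert x ∅) r hcard' hdx hcx
      · push_neg at hall
        obtain ⟨F₁, hF₁, hxF₁⟩ := hall
        refine VD.step _ x (singleton_mem_sigmaC hxU (Finset.notMem_empty x) hF₁ hxF₁)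
          (shedding_sigmaC hSH) ?_ ?_
        · rw [linkC_sigmaC hxU (Finset.notMem_empty x)]
          exact ih (U.erase x) r hcard' (hgf.mono (Finset.erase_subset x U))
        · rw [delC_sigmaC hxU (Finset.notMem_empty x) hSH]
          exact rooted_vd G N (U.erase x) (insert x ∅) r hcard' hdx hcx
    · push_neg at hSup
      rw [sigmaC_of_no_supp hSup]
      exact VD.void

lemma conR_eq_circ {G : SimpleGraph V} {U : Finset V} {r : ℕ} :
    ConR G U r = Circ G U r := by
  ext W
  unfold ConR Circ
  rw [Set.mem_setOf_eq, Set.mem_setOf_eq, connOn_iff]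

lemma sigmaG_eq_sigmaC {G : SimpleGraph V} {r : ℕ} :
    SigmaG G Finset.univ r = SigmaC G Finset.univ ∅ r := by
  ext H
  unfold SigmaG SigmaC
  constructor
  · rintro ⟨W, hW, hsub⟩
    refine ⟨W, mem_Supp_iff.2 ⟨hW.1, hW.2.1, Finset.inter_empty W,
      by rw [Finset.union_empty]; exact connOn_iff.1 hW.2.2⟩, ?_⟩
    rwa [Finset.sdiff_empty]
  · rintro ⟨F, hF, hsub⟩
    obtain ⟨h1, h2, _, h4⟩ := mem_Supp_iff.1 hF
    rw [Finset.union_empty] at h4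
    refine ⟨F, ⟨h1, h2, connOn_iff.2 h4⟩, ?_⟩
    rwa [Finset.sdiff_empty] at hsub

theorem sigma_vd_of_chordal_rGapFree' {V : Type*} [Fintype V] [DecidableEq V]
    (G : SimpleGraph V) (r : ℕ) (hr : 2 ≤ r) (hchordal : Chordal G)
    (hgap : RGapFree G r) :
    VD (SigmaG G Finset.univ r) := by
  obtain ⟨r', rfl⟩ : ∃ r', r = r' + 1 := ⟨r - 1, by omega⟩
  rw [sigmaG_eq_sigmaC]
  have hgf : GapFreeOn G Finset.univ (r' + 1) := by
    unfold RGapFree at hgap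
    rw [conR_eq_circ] at hgap
    exact hgap
  exact unrooted_vd G hchordal Finset.univ.card Finset.univ r' le_rfl hgf

end VDP

theorem sigma_vd_of_chordal_rGapFree {V : Type*} [Fintype V] [DecidableEq V]
    (G : SimpleGraph V) (r : ℕ) (hr : 2 ≤ r) (hchordal : Chordal G)
    (hgap : RGapFree G r) :
    VD (SigmaG G Finset.univ r) :=
  VDP.sigma_vd_of_chordal_rGapFree' G r hr hchordal hgap
end
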